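/- arXiv:1308.5020 — 11 statements merged into one kernel-verified Lean document; each statement's English description precedes it below -/
import Mathlib

section
/- Let X be a finite set with |X| = mn, and let θ be an equivalence relation on X with m blocks of size n each. Then the number of equivalence relations φ on X such that (θ, φ) is a factor pair is (n!)^(m-1). -/
/-- A pair `(θ, φ)` of equivalence relations on `X` is a factor pair if the natural map
`X → X/θ × X/φ` is a bijection. -/
def IsFactorPair {X : Type*} (θ φ : Setoid X) : Prop :=
  Function.Bijective (fun x : X => (Quotient.mk θ x, Quotient.mk φ x))

section Aux

variable {X : Type*} (θ : Setoid X) (q₀ : Quotient θ)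

/-- Fiber of the quotient map. -/
abbrev FPFiber (q : Quotient θ) : Type _ := {x : X // Quotient.mk θ x = q}

noncomputable def factorPairEquiv :
    {φ : Setoid X // IsFactorPair θ φ} ≃
      {g : ∀ q : Quotient θ, FPFiber θ q ≃ FPFiber θ q₀ // g q₀ = Equiv.refl _} where
  toFun := fun ⟨φ, hφ⟩ =>
    letI e : X ≃ Quotient θ × Quotient φ := Equiv.ofBijective _ hφ
    have he : ∀ (p : Quotient θ × Quotient φ),
        (Quotient.mk θ (e.symm p), Quotient.mk φ (e.symm p)) = p := fun p =>
      e.apply_symm_apply p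
    have hmem : ∀ p, Quotient.mk θ (e.symm p) = p.1 := fun p => congrArg Prod.fst (he p)
    have hsnd : ∀ p, Quotient.mk φ (e.symm p) = p.2 := fun p => congrArg Prod.snd (he p)
    have hsymm : ∀ (x : X) (q : Quotient θ), Quotient.mk θ x = q →
        e.symm (q, Quotient.mk φ x) = x := by
      intro x q hq
      apply e.injective
      rw [e.apply_symm_apply]
      show (q, _) = (Quotient.mk θ x, Quotient.mk φ x)
      rw [hq]
    ⟨fun q =>
      { toFun := fun x => ⟨e.symm (q₀, Quotient.mk φ x.1), hmem _⟩
        invFun := fun y => ⟨e.symm (q, Quotient.mk φ y.1), hmem _⟩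
        left_inv := by
          rintro ⟨x, hx⟩
          apply Subtype.ext
          show e.symm (q, _) = x
          rw [hsnd (q₀, Quotient.mk φ x)]
          exact hsymm x q hx
        right_inv := by
          rintro ⟨y, hy⟩
          apply Subtype.ext
          show e.symm (q₀, _) = y
          rw [hsnd (q, Quotient.mk φ y)]
          exact hsymm y q₀ hy },
      by
        ext x
        exact hsymm x.1 q₀ x.2⟩
  invFun := fun ⟨g, hg⟩ =>
    letI F : X → X := fun x => (g (Quotient.mk θ x) ⟨x, rfl⟩).1
    have hF : ∀ (x : X) (q : Quotient θ) (h : Quotient.mk θ x = q), F x = (g q ⟨x, h⟩).1 := by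
      intro x q h; subst h; rfl
    have hF0 : ∀ x, Quotient.mk θ (F x) = q₀ := fun x => (g (Quotient.mk θ x) ⟨x, rfl⟩).2
    ⟨Setoid.ker F, by
      constructor
      · intro x y hxy
        have h1 : Quotient.mk θ x = Quotient.mk θ y := congrArg Prod.fst hxy
        have h2 : F x = F y := Quotient.exact (congrArg Prod.snd hxy)
        have := (g (Quotient.mk θ y)).injective (a₁ := ⟨x, h1⟩) (a₂ := ⟨y, rfl⟩)
          (Subtype.ext (by rw [← hF x _ h1, ← hF y _ rfl]; exact h2))
        exact congrArg Subtype.val this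
      · rintro ⟨q, p⟩
        obtain ⟨y, rfl⟩ := Quotient.exists_rep p
        refine ⟨((g q).symm ⟨F y, hF0 y⟩).1, ?_⟩
        have hx : Quotient.mk θ (((g q).symm ⟨F y, hF0 y⟩).1 : X) = q :=
          ((g q).symm ⟨F y, hF0 y⟩).2
        have hFx : F (((g q).symm ⟨F y, hF0 y⟩).1) = F y := by
          rw [hF _ q hx]
          have : (⟨_, hx⟩ : FPFiber θ q) = (g q).symm ⟨F y, hF0 y⟩ := Subtype.ext rfl
          rw [this, (g q).apply_symm_apply]
        show (_, _) = (q, _)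
        rw [hx]
        exact Prod.ext rfl (Quotient.sound hFx)⟩
  left_inv := by
    rintro ⟨φ, hφ⟩
    apply Subtype.ext
    apply Setoid.ext
    intro a b
    constructor
    · intro hab
      have hab' : ((Equiv.ofBijective _ hφ).symm (q₀, Quotient.mk φ a) : X)
          = (Equiv.ofBijective _ hφ).symm (q₀, Quotient.mk φ b) := hab
      have h2 := (Equiv.ofBijective _ hφ).symm.injective hab'
      exact Quotient.exact (congrArg Prod.snd h2)
    · intro hab
      show Subtype.val _ = Subtype.val _
      apply congrArg
      apply Subtype.ext
      show ((Equiv.ofBijective _ hφ).symm (q₀, Quotient.mk φ a) : X)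
          = (Equiv.ofBijective _ hφ).symm (q₀, Quotient.mk φ b)
      rw [Quotient.sound hab]
  right_inv := by
    rintro ⟨g, hg⟩
    apply Subtype.ext
    show _ = g
    funext q
    apply Equiv.ext
    rintro ⟨x, hx⟩
    apply Subtype.ext
    set F : X → X := fun x => (g (Quotient.mk θ x) ⟨x, rfl⟩).1 with hFdef
    have hF : ∀ (x : X) (q : Quotient θ) (h : Quotient.mk θ x = q), F x = (g q ⟨x, h⟩).1 := by
      intro x q h; subst h; rfl
    set z : X := (g q ⟨x, hx⟩).1 with hz
    have hz0 : Quotient.mk θ z = q₀ := (g q ⟨x, hx⟩).2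
    show ((Equiv.ofBijective _ _).symm (q₀, Quotient.mk (Setoid.ker F) x) : X) = z
    rw [Equiv.symm_apply_eq]
    symm
    have hFz : F z = F x := by
      rw [hF z q₀ hz0, hF x q hx, hg]
      rfl
    show (Quotient.mk θ z, Quotient.mk (Setoid.ker F) z) = _
    rw [hz0]
    exact Prod.ext rfl (Quotient.sound hFz)

end Aux

def piSubtypeFixEquiv {ι : Type*} [DecidableEq ι] (i₀ : ι) (β : ι → Type*) (c : β i₀) :
    {g : ∀ i, β i // g i₀ = c} ≃ ∀ j : {j : ι // j ≠ i₀}, β j.1 where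
  toFun := fun g j => g.1 j.1
  invFun := fun h => ⟨fun i => if hi : i = i₀ then hi.symm ▸ c else h ⟨i, hi⟩, by simp⟩
  left_inv := by
    rintro ⟨g, hg⟩
    apply Subtype.ext
    funext i
    dsimp only
    split_ifs with hi
    · subst hi; exact hg.symm
    · rfl
  right_inv := by
    intro h
    funext j
    rcases j with ⟨j, hj⟩
    exact dif_neg hj

theorem stmt_1 {X : Type*} [Fintype X] (m n : ℕ) (h : Fintype.card X = m * n)
    (θ : Setoid X) (hθ1 : θ.classes.ncard = m) (hθ2 : ∀ c ∈ θ.classes, c.ncard = n) :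
    {φ : Setoid X | IsFactorPair θ φ}.ncard = n.factorial ^ (m - 1) := by
  classical
  rcases isEmpty_or_nonempty X with hX | hX
  · have hm : m = 0 := by
      have hcl : θ.classes = ∅ := by
        ext s
        simp only [Setoid.classes, Set.mem_setOf_eq, Set.mem_empty_iff_false, iff_false]
        rintro ⟨y, -⟩
        exact hX.false y
      rw [hcl] at hθ1
      simpa using hθ1.symm
    subst hm
    simp only [Nat.zero_sub, pow_zero]
    have hset : {φ : Setoid X | IsFactorPair θ φ} = Set.univ := by
      ext φ
      simp only [Set.mem_setOf_eq, Set.mem_univ, iff_true]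
      constructor
      · intro a
        exact (hX.false a).elim
      · rintro ⟨q, p⟩
        obtain ⟨x, -⟩ := Quotient.exists_rep q
        exact (hX.false x).elim
    rw [hset, Set.ncard_univ]
    haveI : Subsingleton (Setoid X) := ⟨fun a b => Setoid.ext fun x => (hX.false x).elim⟩
    haveI : Nonempty (Setoid X) := ⟨θ⟩
    exact Nat.card_unique
  · set q₀ : Quotient θ := Quotient.mk θ (Classical.arbitrary X) with hq₀
    haveI : Finite (Quotient θ) := Quot.finite _
    haveI := Fintype.ofFinite (Quotient θ)
    have hQ : Fintype.card (Quotient θ) = m := by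
      rw [← Nat.card_eq_fintype_card, Nat.card_congr (Setoid.quotientEquivClasses θ),
        Nat.card_coe_set_eq, hθ1]
    have hfib : ∀ q : Quotient θ, Fintype.card (FPFiber θ q) = n := by
      intro q
      obtain ⟨y, rfl⟩ := Quotient.exists_rep q
      have e : FPFiber θ (Quotient.mk θ y) ≃ {x : X // x ∈ {x | θ.r x y}} :=
        Equiv.subtypeEquivRight (fun x => Quotient.eq)
      rw [← Nat.card_eq_fintype_card, Nat.card_congr e, Nat.card_coe_set_eq]
      exact hθ2 _ (Setoid.mem_classes θ y)
    have key := Nat.card_congr ((factorPairEquiv θ q₀).trans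
      (piSubtypeFixEquiv q₀ (fun q => FPFiber θ q ≃ FPFiber θ q₀) (Equiv.refl _)))
    have hL : {φ : Setoid X | IsFactorPair θ φ}.ncard
        = Nat.card (∀ j : {q : Quotient θ // q ≠ q₀}, FPFiber θ j.1 ≃ FPFiber θ q₀) := by
      rw [← Nat.card_coe_set_eq]
      exact key
    rw [hL, Nat.card_pi]
    have hfac : ∀ j : {q : Quotient θ // q ≠ q₀},
        Nat.card (FPFiber θ j.1 ≃ FPFiber θ q₀) = n.factorial := by
      intro j
      have e : FPFiber θ j.1 ≃ FPFiber θ q₀ :=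
        Fintype.equivOfCardEq (by rw [hfib, hfib])
      rw [Nat.card_eq_fintype_card, Fintype.card_equiv e, hfib]
    rw [Finset.prod_congr rfl (fun j _ => hfac j), Finset.prod_const, Finset.card_univ]
    congr 1
    rw [Fintype.card_subtype_compl, Fintype.card_subtype_eq, hQ]
end

section
/- Suppose α and β are equivalence relations on a finite set X, each having the same number k of blocks, with all blocks of α of the same cardinality n and all blocks of β of the same cardinality n. Then there exists an equivalence relation γ on X such that both (α, γ) and (β, γ) are factor pairs. -/
open Finset Function

section Labelling

variable {X I J K : Type*}

theorem card_filter_mem_eq_mul [DecidableEq I] (S : Finset X) (a : X → I) {m : ℕ}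
    (ha : ∀ i, #{x ∈ S | a x = i} = m) (A : Finset I) : #{x ∈ S | a x ∈ A} = #A * m := by
  rw [← sum_card_fiberwise_eq_card_filter, sum_const_nat fun i _ => ha i]

theorem card_filter_image_eq_one [Fintype I] [DecidableEq X] [DecidableEq K]
    {g : I → X} {c : X → K} (hc : Bijective (c ∘ g)) (k : K) :
    #{x ∈ univ.image g | c x = k} = 1 := by
  rw [filter_image, card_image_of_injective _ hc.1.of_comp, card_eq_one]
  obtain ⟨i, hi, hi_unique⟩ := hc.existsUnique k
  exact ⟨i, eq_singleton_iff_unique_mem.2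
    ⟨by simpa using hi, fun i' h => hi_unique i' (by simpa using h)⟩⟩

theorem exists_common_transversal [DecidableEq X] [Fintype I] [Fintype J] [DecidableEq I]
    [DecidableEq J] (S : Finset X) (a : X → I) (b : X → J) {m : ℕ} (hm : 0 < m)
    (ha : ∀ i, #{x ∈ S | a x = i} = m) (hb : ∀ j, #{x ∈ S | b x = j} = m) :
    ∃ T ⊆ S, (∀ i, #{x ∈ T | a x = i} = 1) ∧ ∀ j, #{x ∈ T | b x = j} = 1 := by
  have hcard : Fintype.card I = Fintype.card J := by
    have hSa := card_filter_mem_eq_mul S a ha univ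
    have hSb := card_filter_mem_eq_mul S b hb univ
    simp only [mem_univ, filter_true, card_univ] at hSa hSb
    exact Nat.eq_of_mul_eq_mul_right hm (hSa.symm.trans hSb)
  have hall : ∀ A : Finset I, #A ≤ #{j | ∃ i ∈ A, ∃ x ∈ S, a x = i ∧ b x = j} := by
    intro A
    -- the points over `A` lie over the neighbours of `A`, and both sets have `m` points per block
    refine Nat.le_of_mul_le_mul_right ?_ hm
    rw [← card_filter_mem_eq_mul S a ha, ← card_filter_mem_eq_mul S b hb]
    refine card_le_card fun x hx => ?_
    simp only [mem_filter, mem_univ, true_and] at hx ⊢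
    exact ⟨hx.1, a x, hx.2, x, hx.1, rfl, rfl⟩
  obtain ⟨f, hf, hfab⟩ := (Fintype.all_card_le_filter_rel_iff_exists_injective _).1 hall
  choose g hgS hga hgb using hfab
  refine ⟨univ.image g, by simpa [subset_iff] using hgS, card_filter_image_eq_one ?_,
    card_filter_image_eq_one ?_⟩
  · exact (funext hga : a ∘ g = id) ▸ bijective_id
  · exact (funext hgb : b ∘ g = f) ▸ (Fintype.bijective_iff_injective_and_card f).2 ⟨hf, hcard⟩

theorem card_filter_sdiff_eq_sub [DecidableEq X] [DecidableEq I] {S T : Finset X} (hTS : T ⊆ S)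
    (a : X → I) (i : I) : #{x ∈ S \ T | a x = i} = #{x ∈ S | a x = i} - #{x ∈ T | a x = i} := by
  have hsplit : {x ∈ S \ T | a x = i} = {x ∈ S | a x = i} \ {x ∈ T | a x = i} := by
    ext x
    simp only [mem_filter, mem_sdiff]
    tauto
  rw [hsplit, card_sdiff_of_subset (filter_subset_filter _ hTS)]

theorem injOn_prod_ite_mem [DecidableEq X] [DecidableEq I] {S T : Finset X} {a : X → I}
    {ℓ : X → ℕ} {m : ℕ} (hT : ∀ i, #{x ∈ T | a x = i} ≤ 1) (hℓ : ∀ x ∈ S \ T, ℓ x < m)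
    (hℓa : Set.InjOn (fun x => (a x, ℓ x)) ↑(S \ T)) :
    Set.InjOn (fun x => (a x, if x ∈ T then m else ℓ x)) S := by
  intro x hx y hy hxy
  simp only [Prod.mk.injEq] at hxy
  obtain ⟨hxy_a, hxy_ℓ⟩ := hxy
  by_cases hxT : x ∈ T <;> by_cases hyT : y ∈ T <;> simp only [hxT, hyT, if_true, if_false] at hxy_ℓ
  · exact card_le_one.1 (hT (a x)) x (mem_filter.2 ⟨hxT, rfl⟩) y (mem_filter.2 ⟨hyT, hxy_a.symm⟩)
  · exact absurd (hxy_ℓ ▸ hℓ y (mem_sdiff.2 ⟨hy, hyT⟩)) (lt_irrefl m)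
  · exact absurd (hxy_ℓ ▸ hℓ x (mem_sdiff.2 ⟨hx, hxT⟩)) (lt_irrefl m)
  · exact hℓa (mem_sdiff.2 ⟨hx, hxT⟩) (mem_sdiff.2 ⟨hy, hyT⟩) (Prod.ext hxy_a hxy_ℓ)

theorem exists_label_injOn [DecidableEq X] [Fintype I] [Fintype J] [DecidableEq I]
    [DecidableEq J] (S : Finset X) (a : X → I) (b : X → J) (m : ℕ)
    (ha : ∀ i, #{x ∈ S | a x = i} = m) (hb : ∀ j, #{x ∈ S | b x = j} = m) :
    ∃ ℓ : X → ℕ, (∀ x ∈ S, ℓ x < m) ∧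
      Set.InjOn (fun x => (a x, ℓ x)) S ∧ Set.InjOn (fun x => (b x, ℓ x)) S := by
  induction m generalizing S with
  | zero =>
    have hS : S = ∅ := by simpa using card_filter_mem_eq_mul S a ha univ
    subst hS
    exact ⟨fun _ => 0, by simp, by simp, by simp⟩
  | succ m ih =>
    obtain ⟨T, hTS, hTa, hTb⟩ := exists_common_transversal S a b m.succ_pos ha hb
    obtain ⟨ℓ, hℓ, hℓa, hℓb⟩ := ih (S \ T)
      (fun i => by rw [card_filter_sdiff_eq_sub hTS, ha, hTa]; rfl)
      (fun j => by rw [card_filter_sdiff_eq_sub hTS, hb, hTb]; rfl)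
    refine ⟨fun x => if x ∈ T then m else ℓ x, fun x hx => ?_,
      injOn_prod_ite_mem (fun i => (hTa i).le) hℓ hℓa,
      injOn_prod_ite_mem (fun j => (hTb j).le) hℓ hℓb⟩
    dsimp only
    split_ifs with hxT
    · exact m.lt_succ_self
    · exact (hℓ x (mem_sdiff.2 ⟨hx, hxT⟩)).trans m.lt_succ_self

theorem Setoid.card_filter_mk_eq [Fintype X] {σ : Setoid X} [DecidableEq (Quotient σ)] {n : ℕ}
    (h : ∀ c ∈ σ.classes, c.ncard = n) (q : Quotient σ) : #{x | Quotient.mk σ x = q} = n := by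
  classical
  induction q using Quotient.ind with
  | _ y =>
    rw [← h _ ⟨y, rfl⟩, Set.ncard_eq_toFinset_card']
    congr 1
    ext x
    simp [Quotient.eq]

theorem card_quotient_ker_le [Fintype X] {ℓ : X → ℕ} {n : ℕ} (hℓ : ∀ x, ℓ x < n)
    [Fintype (Quotient (Setoid.ker ℓ))] : Fintype.card (Quotient (Setoid.ker ℓ)) ≤ n := by
  classical
  rw [Fintype.card_congr (Setoid.quotientKerEquivRange ℓ), ← Set.toFinset_card, Set.toFinset_range]
  simpa using card_le_card (s := univ.image ℓ) (t := range n) (by simpa [subset_iff] using hℓ)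

theorem isFactorPair_ker [Fintype X] {θ : Setoid X} [DecidableEq (Quotient θ)] {n : ℕ}
    (hθ : ∀ q, #{x | Quotient.mk θ x = q} = n) {ℓ : X → ℕ} (hℓ : ∀ x, ℓ x < n)
    (hinj : Injective fun x => (Quotient.mk θ x, ℓ x)) : IsFactorPair θ (Setoid.ker ℓ) := by
  classical
  have hinj' : Injective fun x => (Quotient.mk θ x, Quotient.mk (Setoid.ker ℓ) x) :=
    fun x y h => by
      simp only [Prod.mk.injEq] at h
      exact hinj (Prod.ext h.1 (Quotient.exact h.2))
  have hX : Fintype.card X = Fintype.card (Quotient θ) * n := by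
    simpa using card_filter_mem_eq_mul univ (Quotient.mk θ) hθ univ
  refine (Fintype.bijective_iff_injective_and_card _).2 ⟨hinj', ?_⟩
  refine le_antisymm (Fintype.card_le_of_injective _ hinj') ?_
  rw [Fintype.card_prod, hX]
  exact Nat.mul_le_mul_left _ (card_quotient_ker_le hℓ)

end Labelling

theorem stmt_4_general {X : Type*} [Fintype X] (n : ℕ) (α β : Setoid X)
    (hα2 : ∀ c ∈ α.classes, c.ncard = n)
    (hβ2 : ∀ c ∈ β.classes, c.ncard = n) :
    ∃ γ : Setoid X, IsFactorPair α γ ∧ IsFactorPair β γ := by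
  classical
  obtain ⟨ℓ, hℓ, hα, hβ⟩ := exists_label_injOn univ (Quotient.mk α) (Quotient.mk β) n
    (Setoid.card_filter_mk_eq hα2) (Setoid.card_filter_mk_eq hβ2)
  have hℓn : ∀ x, ℓ x < n := fun x => hℓ x (mem_univ x)
  rw [coe_univ, Set.injOn_univ] at hα hβ
  exact ⟨Setoid.ker ℓ, isFactorPair_ker (Setoid.card_filter_mk_eq hα2) hℓn hα,
    isFactorPair_ker (Setoid.card_filter_mk_eq hβ2) hℓn hβ⟩

theorem stmt_4 {X : Type*} [Fintype X] (k n : ℕ) (α β : Setoid X)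
    (hα1 : α.classes.ncard = k) (hα2 : ∀ c ∈ α.classes, c.ncard = n)
    (hβ1 : β.classes.ncard = k) (hβ2 : ∀ c ∈ β.classes, c.ncard = n) :
    ∃ γ : Setoid X, IsFactorPair α γ ∧ IsFactorPair β γ :=
  stmt_4_general n α β hα2 hβ2
end

section
/- Let X₁, …, X_k and Y₁, …, Y_k be two partitions of a finite set X, each into k pieces of size n. Then there exists a partition Z₁, …, Z_n of X into n pieces of size k such that |Xᵢ ∩ Z_j| = 1 and |Yᵢ ∩ Z_j| = 1 for all i ≤ k and j ≤ n. -/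
open Finset

private lemma aux5 {X : Type*} [DecidableEq X] (k : ℕ) :
    ∀ (n : ℕ) (A B : Fin k → Finset X),
    (∀ i, (A i).card = n) → (∀ i j, i ≠ j → Disjoint (A i) (A j)) →
    (∀ i, (B i).card = n) → (∀ i j, i ≠ j → Disjoint (B i) (B j)) →
    (Finset.univ.biUnion A = Finset.univ.biUnion B) →
    ∃ Z : Fin n → Finset X,
      (∀ j, (Z j).card = k) ∧ (∀ j j', j ≠ j' → Disjoint (Z j) (Z j')) ∧
      (Finset.univ.biUnion Z = Finset.univ.biUnion A) ∧
      ∀ i j, (A i ∩ Z j).card = 1 ∧ (B i ∩ Z j).card = 1 := by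
  intro n
  induction n with
  | zero =>
    intro A B hA1 hA2 hB1 hB2 hAB
    refine ⟨fun j => j.elim0, fun j => j.elim0, fun j => j.elim0, ?_, fun i j => j.elim0⟩
    ext x
    simp only [mem_biUnion, mem_univ, true_and]
    constructor
    · rintro ⟨j, _⟩; exact j.elim0
    · rintro ⟨i, hx⟩
      have : A i = ∅ := card_eq_zero.mp (hA1 i)
      simp [this] at hx
  | succ n ih =>
    intro A B hA1 hA2 hB1 hB2 hAB
    classical
    -- Hall's theorem to get a common transversal
    set t : Fin k → Finset (Fin k) := fun i => Finset.univ.filter fun j => (A i ∩ B j).Nonempty with ht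
    have hall : ∀ s : Finset (Fin k), s.card ≤ (s.biUnion t).card := by
      intro s
      have hU : (s.biUnion A).card = s.card * (n+1) := by
        rw [card_biUnion (fun i _ j _ hij => hA2 i j hij)]
        simp [hA1, mul_comm]
      have hsub : s.biUnion A ⊆ (s.biUnion t).biUnion B := by
        intro x hx
        rcases mem_biUnion.mp hx with ⟨i, hi, hxi⟩
        have hx' : x ∈ Finset.univ.biUnion B := by
          rw [← hAB]; exact mem_biUnion.mpr ⟨i, mem_univ i, hxi⟩
        rcases mem_biUnion.mp hx' with ⟨j, _, hxj⟩
        refine mem_biUnion.mpr ⟨j, ?_, hxj⟩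
        exact mem_biUnion.mpr ⟨i, hi, by simp [ht]; exact ⟨x, mem_inter.mpr ⟨hxi, hxj⟩⟩⟩
      have hV : ((s.biUnion t).biUnion B).card = (s.biUnion t).card * (n+1) := by
        rw [card_biUnion (fun i _ j _ hij => hB2 i j hij)]
        simp [hB1, mul_comm]
      have := card_le_card hsub
      rw [hU, hV] at this
      exact Nat.le_of_mul_le_mul_right this (Nat.succ_pos n)
    obtain ⟨f, hfinj, hf⟩ := (Finset.all_card_le_biUnion_card_iff_exists_injective t).mp hall
    have hfmem : ∀ i, (A i ∩ B (f i)).Nonempty := by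
      intro i
      have := hf i
      simp [ht] at this
      exact this
    choose x hx using hfmem
    have hxA : ∀ i, x i ∈ A i := fun i => (mem_inter.mp (hx i)).1
    have hxB : ∀ i, x i ∈ B (f i) := fun i => (mem_inter.mp (hx i)).2
    have hxinj : Function.Injective x := by
      intro i i' h
      by_contra hne
      exact (disjoint_left.mp (hA2 i i' hne)) (hxA i) (h ▸ hxA i')
    set T : Finset X := Finset.univ.image x with hT
    have hTcard : T.card = k := by
      rw [hT, card_image_of_injective _ hxinj, card_univ, Fintype.card_fin]
    have hmemT : ∀ i, x i ∈ T := fun i => mem_image.mpr ⟨i, mem_univ i, rfl⟩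
    have hAT : ∀ i, A i ∩ T = {x i} := by
      intro i
      ext y
      simp only [mem_inter, mem_singleton, hT, mem_image, mem_univ, true_and]
      constructor
      · rintro ⟨hy, i', rfl⟩
        by_contra hne
        have hne' : i' ≠ i := fun h => hne (by rw [h])
        exact (disjoint_left.mp (hA2 i' i hne')) (hxA i') hy
      · rintro rfl; exact ⟨hxA i, i, rfl⟩
    have hfsurj : Function.Surjective f := Finite.surjective_of_injective hfinj
    have hBT : ∀ j, B j ∩ T = {x (Function.surjInv hfsurj j)} := by
      intro j
      set i₀ := Function.surjInv hfsurj j with hi₀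
      have hfi₀ : f i₀ = j := Function.surjInv_eq hfsurj j
      ext y
      simp only [mem_inter, mem_singleton, hT, mem_image, mem_univ, true_and]
      constructor
      · rintro ⟨hy, i', rfl⟩
        by_contra hne
        have hne' : i' ≠ i₀ := fun h => hne (by rw [h])
        have : f i' ≠ j := fun h => hne' (hfinj (h.trans hfi₀.symm))
        exact (disjoint_left.mp (hB2 (f i') j this)) (hxB i') hy
      · rintro rfl; exact ⟨hfi₀ ▸ hxB i₀, i₀, rfl⟩
    -- remove T and recurse
    set A' : Fin k → Finset X := fun i => A i \ T with hA'
    set B' : Fin k → Finset X := fun i => B i \ T with hB'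
    have hA'1 : ∀ i, (A' i).card = n := by
      intro i
      have : A' i = A i \ {x i} := by
        rw [hA', sdiff_eq_sdiff_iff_inter_eq_inter.mpr]
        rw [hAT i, inter_singleton_of_mem (hxA i)]
      rw [this, card_sdiff_of_subset (singleton_subset_iff.mpr (hxA i)), hA1, card_singleton]
      omega
    have hB'1 : ∀ i, (B' i).card = n := by
      intro i
      have hm : x (Function.surjInv hfsurj i) ∈ B i ∩ T := by
        rw [hBT i]; exact mem_singleton_self _
      have heq : B' i = B i \ {x (Function.surjInv hfsurj i)} := by
        rw [hB', sdiff_eq_sdiff_iff_inter_eq_inter.mpr]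
        rw [hBT i, inter_singleton_of_mem (mem_inter.mp hm).1]
      rw [heq, card_sdiff_of_subset (singleton_subset_iff.mpr (mem_inter.mp hm).1), hB1, card_singleton]
      omega
    have hA'2 : ∀ i j, i ≠ j → Disjoint (A' i) (A' j) :=
      fun i j hij => Disjoint.mono sdiff_le sdiff_le (hA2 i j hij)
    have hB'2 : ∀ i j, i ≠ j → Disjoint (B' i) (B' j) :=
      fun i j hij => Disjoint.mono sdiff_le sdiff_le (hB2 i j hij)
    have hUA' : Finset.univ.biUnion A' = Finset.univ.biUnion A \ T := by
      ext y; simp [hA', mem_biUnion, mem_sdiff]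
    have hUB' : Finset.univ.biUnion B' = Finset.univ.biUnion B \ T := by
      ext y; simp [hB', mem_biUnion, mem_sdiff]
    have hA'B' : Finset.univ.biUnion A' = Finset.univ.biUnion B' := by
      rw [hUA', hUB', hAB]
    obtain ⟨Z', hZ'1, hZ'2, hZ'3, hZ'4⟩ := ih A' B' hA'1 hA'2 hB'1 hB'2 hA'B'
    have hZ'T : ∀ j, Disjoint (Z' j) T := by
      intro j
      have hsub : Z' j ⊆ Finset.univ.biUnion Z' := subset_biUnion_of_mem Z' (mem_univ j)
      rw [hZ'3, hUA'] at hsub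
      exact disjoint_left.mpr fun {a} ha haT => (mem_sdiff.mp (hsub ha)).2 haT
    refine ⟨Fin.cons T Z', ?_, ?_, ?_, ?_⟩
    · intro j
      refine Fin.cases ?_ ?_ j
      · simpa using hTcard
      · intro j'; simpa using hZ'1 j'
    · intro j j' hjj'
      revert hjj'
      refine Fin.cases ?_ (fun a => ?_) j <;> refine Fin.cases ?_ (fun b => ?_) j' <;>
        intro hjj'
      · exact absurd rfl hjj'
      · simpa using (hZ'T b).symm
      · simpa using hZ'T a
      · have : a ≠ b := fun h => hjj' (by rw [h])
        simpa using hZ'2 a b this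
    · ext y
      simp only [mem_biUnion, mem_univ, true_and]
      constructor
      · rintro ⟨j, hj⟩
        refine Fin.cases ?_ ?_ j hj
        · intro hy
          simp only [Fin.cons_zero] at hy
          rcases mem_image.mp hy with ⟨i, _, rfl⟩
          exact ⟨i, hxA i⟩
        · intro j' hy
          simp only [Fin.cons_succ] at hy
          have : y ∈ Finset.univ.biUnion Z' := mem_biUnion.mpr ⟨j', mem_univ _, hy⟩
          rw [hZ'3, hUA'] at this
          rcases mem_biUnion.mp (mem_sdiff.mp this).1 with ⟨i, _, hi⟩
          exact ⟨i, hi⟩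
      · rintro ⟨i, hi⟩
        by_cases hyT : y ∈ T
        · exact ⟨0, by simpa using hyT⟩
        · have : y ∈ Finset.univ.biUnion A' := by
            rw [hUA']; exact mem_sdiff.mpr ⟨mem_biUnion.mpr ⟨i, mem_univ _, hi⟩, hyT⟩
          rw [← hZ'3] at this
          rcases mem_biUnion.mp this with ⟨j', _, hj'⟩
          exact ⟨j'.succ, by simpa using hj'⟩
    · intro i j
      refine Fin.cases ?_ ?_ j
      · constructor
        · simp only [Fin.cons_zero]
          rw [hAT i, card_singleton]
        · simp only [Fin.cons_zero]
          rw [hBT i, card_singleton]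
      · intro j'
        have hAeq : A i ∩ Z' j' = A' i ∩ Z' j' := by
          ext y
          simp only [mem_inter, hA', mem_sdiff]
          constructor
          · rintro ⟨h1, h2⟩
            exact ⟨⟨h1, disjoint_left.mp (hZ'T j') h2⟩, h2⟩
          · rintro ⟨⟨h1, _⟩, h2⟩; exact ⟨h1, h2⟩
        have hBeq : B i ∩ Z' j' = B' i ∩ Z' j' := by
          ext y
          simp only [mem_inter, hB', mem_sdiff]
          constructor
          · rintro ⟨h1, h2⟩
            exact ⟨⟨h1, disjoint_left.mp (hZ'T j') h2⟩, h2⟩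
          · rintro ⟨⟨h1, _⟩, h2⟩; exact ⟨h1, h2⟩
        simp only [Fin.cons_succ]
        rw [hAeq, hBeq]
        exact hZ'4 i j'

theorem stmt_5 {X : Type*} [Fintype X] [DecidableEq X] (k n : ℕ)
    (A B : Fin k → Finset X)
    (hA1 : ∀ i, (A i).card = n) (hA2 : ∀ i j, i ≠ j → Disjoint (A i) (A j))
    (hA3 : ∀ x : X, ∃ i, x ∈ A i)
    (hB1 : ∀ i, (B i).card = n) (hB2 : ∀ i j, i ≠ j → Disjoint (B i) (B j))
    (hB3 : ∀ x : X, ∃ i, x ∈ B i) :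
    ∃ Z : Fin n → Finset X,
      (∀ j, (Z j).card = k) ∧ (∀ j j', j ≠ j' → Disjoint (Z j) (Z j')) ∧
      (∀ x : X, ∃ j, x ∈ Z j) ∧
      ∀ i j, (A i ∩ Z j).card = 1 ∧ (B i ∩ Z j).card = 1 := by
  have hAB : Finset.univ.biUnion A = Finset.univ.biUnion B := by
    have h1 : Finset.univ.biUnion A = Finset.univ := by
      ext x; simp only [mem_biUnion, mem_univ, true_and, iff_true]; exact hA3 x
    have h2 : Finset.univ.biUnion B = Finset.univ := by
      ext x; simp only [mem_biUnion, mem_univ, true_and, iff_true]; exact hB3 x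
    rw [h1, h2]
  obtain ⟨Z, h1, h2, h3, h4⟩ := aux5 k n A B hA1 hA2 hB1 hB2 hAB
  refine ⟨Z, h1, h2, ?_, h4⟩
  intro x
  have : x ∈ Finset.univ.biUnion Z := by
    rw [h3]
    rcases hA3 x with ⟨i, hi⟩
    exact mem_biUnion.mpr ⟨i, mem_univ _, hi⟩
  rcases mem_biUnion.mp this with ⟨j, _, hj⟩
  exact ⟨j, hj⟩
end

section
/- Let X be a finite set with |X| = p^k for a prime p. Then the number of atoms of Fact X, i.e., the number of factor pairs (θ₁, θ₂) where θ₁ has p^{k-1} blocks of p elements each, equals p^k! / (p! · (p^{k-1})!). -/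
open Function

/-- Counting lemma: if `f : α → β` has range `S` and all fibers over `S` have
cardinality `c`, then `Nat.card α = S.ncard * c`. -/
lemma aux_card_eq_mul {α β : Type*} [Finite α] (f : α → β) (S : Set β)
    (hrange : Set.range f = S) {c : ℕ}
    (hfib : ∀ b ∈ S, Nat.card {a // f a = b} = c) :
    Nat.card α = S.ncard * c := by
  classical
  have hSfin : S.Finite := hrange ▸ Set.finite_range f
  haveI : Fintype S := hSfin.fintype
  let f' : α → S := fun a => ⟨f a, hrange ▸ Set.mem_range_self a⟩
  have key : ∀ q : S, Nat.card {a // f' a = q} = c := by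
    intro q
    have e2 : {a // f' a = q} ≃ {a // f a = q.val} :=
      Equiv.subtypeEquivRight (fun a => by
        constructor
        · intro h; exact congrArg Subtype.val h
        · intro h; exact Subtype.ext h)
    rw [Nat.card_congr e2]
    exact hfib q.val q.2
  have e3 : ∀ q : S, Nonempty ({a // f' a = q} ≃ Fin c) := fun q =>
    ⟨Finite.equivFinOfCardEq (key q)⟩
  have e4 : α ≃ S × Fin c :=
    ((Equiv.sigmaFiberEquiv f').symm.trans
      (Equiv.sigmaCongrRight (fun q => Classical.choice (e3 q)))).trans
      (Equiv.sigmaEquivProd S (Fin c))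
  rw [Nat.card_congr e4, Nat.card_prod, Nat.card_eq_fintype_card (α := Fin c),
    Fintype.card_fin, Nat.card_coe_set_eq]

theorem stmt_6 {X : Type*} [Fintype X] (p k : ℕ) (hp : p.Prime)
    (hX : Fintype.card X = p ^ k) :
    {q : Setoid X × Setoid X | IsFactorPair q.1 q.2 ∧
        q.1.classes.ncard = p ^ (k - 1) ∧ ∀ c ∈ q.1.classes, c.ncard = p}.ncard =
      (p ^ k).factorial / (p.factorial * (p ^ (k - 1)).factorial) := by
  classical
  set S := {q : Setoid X × Setoid X | IsFactorPair q.1 q.2 ∧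
      q.1.classes.ncard = p ^ (k - 1) ∧ ∀ c ∈ q.1.classes, c.ncard = p} with hS
  obtain _ | j := k
  · -- k = 0 : both sides are zero
    have hcard1 : Fintype.card X = 1 := by simpa using hX
    have hSempty : S = ∅ := by
      rw [Set.eq_empty_iff_forall_notMem]
      rintro ⟨θ, φ⟩ ⟨-, -, h3⟩
      obtain ⟨x⟩ := Fintype.card_pos_iff.mp (by omega : 0 < Fintype.card X)
      have hmem := Setoid.mem_classes θ x
      have hp' := h3 _ hmem
      have hle : ({y | θ y x} : Set X).ncard ≤ Fintype.card X := by
        have h' := Set.ncard_le_ncard (Set.subset_univ {y | θ y x}) (Set.finite_univ)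
        rwa [Set.ncard_univ, Nat.card_eq_fintype_card] at h'
      have := hp.two_le
      omega
    rw [hSempty, Set.ncard_empty]
    have h2 : 2 ≤ p.factorial := by
      calc 2 = Nat.factorial 2 := rfl
      _ ≤ p.factorial := Nat.factorial_le hp.two_le
    simp only [Nat.zero_sub, pow_zero, Nat.factorial_one, mul_one]
    exact (Nat.div_eq_of_lt (by omega)).symm
  · -- k = j + 1
    set n := p ^ j with hn
    have hk1 : j + 1 - 1 = j := rfl
    have hnpos : 0 < n := pow_pos hp.pos j
    have hppos : 0 < p := hp.pos
    have hcard : Fintype.card X = n * p := by rw [hX, hn, pow_succ]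
    -- the counting map
    set F : (X ≃ Fin n × Fin p) → Setoid X × Setoid X :=
      fun e => (Setoid.ker (fun x => (e x).1), Setoid.ker (fun x => (e x).2)) with hF
    -- range F ⊆ S
    have hsub : ∀ e : X ≃ Fin n × Fin p, F e ∈ S := by
      intro e
      refine ⟨?_, ?_, ?_⟩
      · -- factor pair
        constructor
        · intro x y hxy
          simp only [Prod.mk.injEq] at hxy
          have h1 : (e x).1 = (e y).1 := by
            have := Quotient.eq.mp hxy.1
            exact this
          have h2 : (e x).2 = (e y).2 := by
            have := Quotient.eq.mp hxy.2
            exact this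
          exact e.injective (Prod.ext h1 h2)
        · rintro ⟨a, b⟩
          obtain ⟨y, rfl⟩ := Quotient.exists_rep a
          obtain ⟨z, rfl⟩ := Quotient.exists_rep b
          refine ⟨e.symm ((e y).1, (e z).2), ?_⟩
          simp only [Prod.mk.injEq]
          constructor
          · exact Quotient.eq.mpr (by
              show (e (e.symm ((e y).1, (e z).2))).1 = (e y).1
              simp)
          · exact Quotient.eq.mpr (by
              show (e (e.symm ((e y).1, (e z).2))).2 = (e z).2
              simp)
      · -- number of classes
        have e1 : Quotient (F e).1 ≃ Fin n := by
          apply Setoid.quotientKerEquivOfSurjective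
          intro a
          obtain ⟨b⟩ : Nonempty (Fin p) := ⟨⟨0, hppos⟩⟩
          exact ⟨e.symm (a, b), by simp⟩
        have : Nat.card ((F e).1.classes : Set (Set X)) = n := by
          rw [Nat.card_congr (Setoid.quotientEquivClasses (F e).1).symm,
            Nat.card_congr e1, Nat.card_eq_fintype_card, Fintype.card_fin]
        rw [← Nat.card_coe_set_eq]
        exact this
      · -- size of each class
        intro c hc
        obtain ⟨y, hy⟩ := hc
        have hceq : c = {x | (e x).1 = (e y).1} := by
          rw [hy]; rfl
        have ec : c ≃ Fin p := by
          rw [hceq]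
          exact
            { toFun := fun x => (e x.val).2
              invFun := fun b => ⟨e.symm ((e y).1, b), by simp⟩
              left_inv := by
                rintro ⟨x, hx⟩
                simp only [Set.mem_setOf_eq] at hx
                apply Subtype.ext
                simp only
                apply e.injective
                simp [← hx]
              right_inv := by intro b; simp }
        rw [← Nat.card_coe_set_eq, Nat.card_congr ec, Nat.card_eq_fintype_card,
          Fintype.card_fin]
    -- S ⊆ range F
    have hsur : ∀ q ∈ S, ∃ e : X ≃ Fin n × Fin p, F e = q := by
      rintro ⟨θ, φ⟩ ⟨h1, h2, -⟩
      set eG : X ≃ Quotient θ × Quotient φ := Equiv.ofBijective _ h1 with heG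
      have cardθ : Nat.card (Quotient θ) = n := by
        rw [Nat.card_congr (Setoid.quotientEquivClasses θ), Nat.card_coe_set_eq]
        exact h2
      have cardφ : Nat.card (Quotient φ) = p := by
        have hX' : Nat.card X = n * p := by rw [Nat.card_eq_fintype_card]; exact hcard
        have : Nat.card X = Nat.card (Quotient θ) * Nat.card (Quotient φ) := by
          rw [Nat.card_congr eG, Nat.card_prod]
        rw [hX', cardθ] at this
        exact (Nat.eq_of_mul_eq_mul_left hnpos this.symm)
      have e1 : Quotient θ ≃ Fin n := Finite.equivFinOfCardEq cardθ
      have e2 : Quotient φ ≃ Fin p := Finite.equivFinOfCardEq cardφ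
      refine ⟨eG.trans (e1.prodCongr e2), ?_⟩
      have hGfst : ∀ x : X, (eG x).1 = Quotient.mk θ x := fun x => by rw [heG]; rfl
      have hGsnd : ∀ x : X, (eG x).2 = Quotient.mk φ x := fun x => by rw [heG]; rfl
      simp only [hF, Prod.mk.injEq]
      constructor
      · apply Setoid.ext
        intro a b
        rw [Setoid.ker_def]
        simp only [Equiv.trans_apply, Equiv.prodCongr_apply, Prod.map_fst, hGfst]
        rw [e1.injective.eq_iff]
        constructor
        · intro h; exact Quotient.eq.mp h
        · intro h; exact Quotient.eq.mpr h
      · apply Setoid.ext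
        intro a b
        rw [Setoid.ker_def]
        simp only [Equiv.trans_apply, Equiv.prodCongr_apply, Prod.map_snd, hGsnd]
        rw [e2.injective.eq_iff]
        constructor
        · intro h; exact Quotient.eq.mp h
        · intro h; exact Quotient.eq.mpr h
    have hrange : Set.range F = S := by
      apply Set.eq_of_subset_of_subset
      · rintro _ ⟨e, rfl⟩; exact hsub e
      · intro q hq; obtain ⟨e, he⟩ := hsur q hq; exact ⟨e, he⟩
    -- fibers
    have hfib : ∀ q ∈ S, Nat.card {e : X ≃ Fin n × Fin p // F e = q} =
        n.factorial * p.factorial := by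
      intro q hq
      obtain ⟨e₀, he₀⟩ := hsur q hq
      -- the map from pairs of permutations to the fiber
      have hker : ∀ (σ : Equiv.Perm (Fin n)) (τ : Equiv.Perm (Fin p)),
          F (e₀.trans (σ.prodCongr τ)) = q := by
        intro σ τ
        rw [← he₀]
        simp only [hF, Prod.mk.injEq]
        constructor
        · apply Setoid.ext; intro a b
          rw [Setoid.ker_def, Setoid.ker_def]
          simp only [Equiv.trans_apply, Equiv.prodCongr_apply, Prod.map_fst]
          exact σ.injective.eq_iff
        · apply Setoid.ext; intro a b
          rw [Setoid.ker_def, Setoid.ker_def]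
          simp only [Equiv.trans_apply, Equiv.prodCongr_apply, Prod.map_snd]
          exact τ.injective.eq_iff
      set Φ : Equiv.Perm (Fin n) × Equiv.Perm (Fin p) →
          {e : X ≃ Fin n × Fin p // F e = q} :=
        fun st => ⟨e₀.trans (st.1.prodCongr st.2), hker st.1 st.2⟩ with hΦ
      have hΦbij : Function.Bijective Φ := by
        constructor
        · rintro ⟨σ, τ⟩ ⟨σ', τ'⟩ h
          have h' : e₀.trans (σ.prodCongr τ) = e₀.trans (σ'.prodCongr τ') :=
            congrArg Subtype.val h
          have h'' : ∀ z : Fin n × Fin p, (σ z.1, τ z.2) = (σ' z.1, τ' z.2) := by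
            intro z
            have := congrArg (fun f : X ≃ Fin n × Fin p => f (e₀.symm z)) h'
            simpa [Prod.map] using this
          have hσ : σ = σ' := by
            apply Equiv.ext; intro a
            have := h'' (a, ⟨0, hppos⟩)
            exact (Prod.mk.injEq _ _ _ _ ▸ this).1
          have hτ : τ = τ' := by
            apply Equiv.ext; intro b
            have := h'' (⟨0, hnpos⟩, b)
            exact (Prod.mk.injEq _ _ _ _ ▸ this).2
          rw [hσ, hτ]
        · rintro ⟨e, he⟩
          -- both e and e₀ have F-value q
          have hfst : ∀ x y : X, (e x).1 = (e y).1 ↔ (e₀ x).1 = (e₀ y).1 := by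
            intro x y
            have hh : Setoid.ker (fun x : X => (e x).1) =
                Setoid.ker (fun x : X => (e₀ x).1) := by
              have := he.trans he₀.symm
              exact congrArg Prod.fst this
            rw [← Setoid.ker_def (f := fun x : X => (e x).1), hh, Setoid.ker_def]
          have hsnd : ∀ x y : X, (e x).2 = (e y).2 ↔ (e₀ x).2 = (e₀ y).2 := by
            intro x y
            have hh : Setoid.ker (fun x : X => (e x).2) =
                Setoid.ker (fun x : X => (e₀ x).2) := by
              have := he.trans he₀.symm
              exact congrArg Prod.snd this
            rw [← Setoid.ker_def (f := fun x : X => (e x).2), hh, Setoid.ker_def]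
          set g : Fin n × Fin p → Fin n × Fin p := fun z => e (e₀.symm z) with hg
          have P1 : ∀ z w, (g z).1 = (g w).1 ↔ z.1 = w.1 := by
            intro z w
            rw [hg]
            simp only
            rw [hfst (e₀.symm z) (e₀.symm w)]
            simp
          have P2 : ∀ z w, (g z).2 = (g w).2 ↔ z.2 = w.2 := by
            intro z w
            rw [hg]
            simp only
            rw [hsnd (e₀.symm z) (e₀.symm w)]
            simp
          set b₀ : Fin p := ⟨0, hppos⟩
          set a₀ : Fin n := ⟨0, hnpos⟩
          have hσinj : Function.Injective (fun a : Fin n => (g (a, b₀)).1) := by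
            intro a a' h
            have := (P1 (a, b₀) (a', b₀)).mp h
            exact this
          have hτinj : Function.Injective (fun b : Fin p => (g (a₀, b)).2) := by
            intro b b' h
            have := (P2 (a₀, b) (a₀, b')).mp h
            exact this
          set σ : Equiv.Perm (Fin n) :=
            Equiv.ofBijective _ (Finite.injective_iff_bijective.mp hσinj)
          set τ : Equiv.Perm (Fin p) :=
            Equiv.ofBijective _ (Finite.injective_iff_bijective.mp hτinj)
          refine ⟨(σ, τ), ?_⟩
          apply Subtype.ext
          simp only [hΦ]
          apply Equiv.ext
          intro x
          have hgx : g (e₀ x) = e x := by rw [hg]; simp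
          have h1 : σ (e₀ x).1 = (e x).1 := by
            show (g ((e₀ x).1, b₀)).1 = (e x).1
            rw [← hgx]
            exact (P1 ((e₀ x).1, b₀) (e₀ x)).mpr rfl
          have h2 : τ (e₀ x).2 = (e x).2 := by
            show (g (a₀, (e₀ x).2)).2 = (e x).2
            rw [← hgx]
            exact (P2 (a₀, (e₀ x).2) (e₀ x)).mpr rfl
          show (σ (e₀ x).1, τ (e₀ x).2) = e x
          rw [h1, h2]
      rw [Nat.card_congr (Equiv.ofBijective Φ hΦbij).symm, Nat.card_prod,
        Nat.card_eq_fintype_card, Nat.card_eq_fintype_card, Fintype.card_perm,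
        Fintype.card_perm, Fintype.card_fin, Fintype.card_fin]
    -- put it together
    have hmain : Nat.card (X ≃ Fin n × Fin p) = S.ncard * (n.factorial * p.factorial) :=
      aux_card_eq_mul F S hrange hfib
    have hcardE : Nat.card (X ≃ Fin n × Fin p) = (p ^ (j + 1)).factorial := by
      have hce : Fintype.card (Fin n × Fin p) = Fintype.card X := by
        simp [hcard]
      obtain ⟨e⟩ := Fintype.card_eq.mp hce.symm
      rw [Nat.card_eq_fintype_card, Fintype.card_equiv e, hX]
    rw [hcardE] at hmain
    have hpos : 0 < p.factorial * (p ^ (j + 1 - 1)).factorial :=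
      Nat.mul_pos (Nat.factorial_pos _) (Nat.factorial_pos _)
    rw [hk1] at *
    symm
    apply Nat.div_eq_of_eq_mul_left hpos
    rw [hmain, hn]
    ring
end

section
/- Let X be a finite set with |X| = p^k for a prime p. Then the number of unordered factor k-tuples (θ₁, …, θ_k) on X where each θᵢ has exactly p blocks equals p^k! / (k! · (p!)^k). -/
/-!
A bijection `e : X ≃ (Fin k → Fin p)` yields the factor `k`-tuple formed by the kernels of its
coordinates, and every factor `k`-tuple `S` with `p`-block components arises this way. The
bijections over a fixed `S` correspond to an ordering `Fin k ≃ S` together with a labelling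
`X/θ ≃ Fin p` of the blocks of each `θ ∈ S`, so every fibre has `k! · (p!)^k` elements, while
there are `(p^k)!` bijections in all.
-/

open Function Finset
open scoped Classical Nat

noncomputable section

theorem Fintype.card_eq_card_mul_of_card_fiber {A B : Type*} [Fintype A] [Fintype B]
    [DecidableEq B] (f : A → B) {n : ℕ} (hf : ∀ b, Fintype.card {a // f a = b} = n) :
    Fintype.card A = Fintype.card B * n := by
  rw [← Fintype.card_congr (Equiv.sigmaFiberEquiv f), Fintype.card_sigma]
  simp [hf]

instance Setoid.instFintype {X : Type*} [Fintype X] : Fintype (Setoid X) :=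
  Fintype.ofInjective (fun s : Setoid X => (s : X → X → Prop)) fun _ _ h =>
    Setoid.ext fun a b => iff_of_eq (congrFun (congrFun h a) b)

variable {X ι α : Type*}

def factorTuples (X : Type*) (p k : ℕ) : Set (Finset (Setoid X)) :=
  {S | S.card = k ∧ (∀ θ ∈ S, θ.classes.ncard = p) ∧
    Bijective (fun x : X => fun θ : S => Quotient.mk θ.1 x)}

section coordKer

variable (e : X ≃ (ι → α))

def coordKer (i : ι) : Setoid X := Setoid.ker fun x => e x i

variable {e} in
theorem coordKer_rel {i : ι} {x y : X} : coordKer e i x y ↔ e x i = e y i := Iff.rfl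

theorem coordKer_injective [Nontrivial α] : Injective (coordKer e) := by
  intro i j hij
  by_contra hne
  obtain ⟨a, b, hab⟩ := exists_pair_ne α
  have h : coordKer e i (e.symm fun _ => a) (e.symm (update (fun _ => a) j b)) := by
    simp [coordKer_rel, update_of_ne hne]
  rw [hij, coordKer_rel] at h
  simp only [Equiv.apply_symm_apply, update_self] at h
  exact hab h

def quotientCoordKerEquiv (i : ι) : Quotient (coordKer e i) ≃ α :=
  Setoid.quotientKerEquivOfRightInverse _ (fun a => e.symm fun _ => a) fun a => by simp

@[simp]
theorem quotientCoordKerEquiv_mk (i : ι) (x : X) :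
    quotientCoordKerEquiv e i (Quotient.mk _ x) = e x i := rfl

theorem ncard_classes_coordKer (i : ι) : (coordKer e i).classes.ncard = Nat.card α := by
  rw [← Nat.card_coe_set_eq, ← Nat.card_congr (Setoid.quotientEquivClasses _),
    Nat.card_congr (quotientCoordKerEquiv e i)]

variable [Fintype ι]

def coordKers : Finset (Setoid X) := univ.image (coordKer e)

variable {e} in
theorem mem_coordKers {θ : Setoid X} : θ ∈ coordKers e ↔ ∃ i, coordKer e i = θ := by
  simp [coordKers]

theorem bijective_quotientMk_coordKers :
    Bijective fun x (θ : coordKers e) => Quotient.mk θ.1 x := by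
  constructor
  · intro x y hxy
    refine e.injective (funext fun i => ?_)
    exact Quotient.exact (congrFun hxy ⟨coordKer e i, mem_coordKers.2 ⟨i, rfl⟩⟩)
  · intro a
    refine ⟨e.symm fun i => quotientCoordKerEquiv e i (a ⟨_, mem_coordKers.2 ⟨i, rfl⟩⟩), ?_⟩
    ext ⟨θ, hθ⟩
    obtain ⟨i, rfl⟩ := mem_coordKers.1 hθ
    apply (quotientCoordKerEquiv e i).injective
    simp

theorem coordKers_mem_factorTuples [Fintype α] [Nontrivial α] :
    coordKers e ∈ factorTuples X (Fintype.card α) (Fintype.card ι) := by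
  refine ⟨?_, ?_, bijective_quotientMk_coordKers e⟩
  · rw [coordKers, card_image_of_injective _ (coordKer_injective e), card_univ]
  · rintro θ hθ
    obtain ⟨i, rfl⟩ := mem_coordKers.1 hθ
    rw [ncard_classes_coordKer, Nat.card_eq_fintype_card]

end coordKer

section factorEquiv

variable {S : Finset (Setoid X)} (hS : Bijective fun x (θ : S) => Quotient.mk θ.1 x)
  (σ : ι ≃ S) (q : ∀ θ : S, Quotient θ.1 ≃ α)

def factorEquiv : X ≃ (ι → α) :=
  (Equiv.ofBijective _ hS).trans ((Equiv.piCongrRight q).trans (σ.symm.arrowCongr (.refl α)))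

@[simp]
theorem factorEquiv_apply (x : X) (i : ι) :
    factorEquiv hS σ q x i = q (σ i) (Quotient.mk _ x) := rfl

theorem coordKer_factorEquiv (i : ι) : coordKer (factorEquiv hS σ q) i = σ i :=
  Setoid.ext fun x y => by simp [coordKer_rel, (q _).injective.eq_iff, Quotient.eq]

theorem coordKers_factorEquiv [Fintype ι] : coordKers (factorEquiv hS σ q) = S := by
  ext θ
  simp only [mem_coordKers, coordKer_factorEquiv]
  exact ⟨fun ⟨i, hi⟩ => hi ▸ (σ i).2, fun h => ⟨σ.symm ⟨θ, h⟩, by simp⟩⟩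

theorem bijective_factorEquiv [Fintype ι] [Nontrivial α] :
    Bijective fun z : (ι ≃ S) × (∀ θ : S, Quotient θ.1 ≃ α) =>
      (⟨factorEquiv hS z.1 z.2, coordKers_factorEquiv hS z.1 z.2⟩ :
        {e : X ≃ (ι → α) // coordKers e = S}) := by
  constructor
  · rintro ⟨σ, q⟩ ⟨σ', q'⟩ h
    have he : factorEquiv hS σ q = factorEquiv hS σ' q' := congrArg Subtype.val h
    obtain rfl : σ = σ' := Equiv.ext fun i => Subtype.ext <| by
      rw [← coordKer_factorEquiv hS σ q, ← coordKer_factorEquiv hS σ' q', he]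
    obtain rfl : q = q' := funext fun θ => Equiv.ext fun a => by
      obtain ⟨i, rfl⟩ := σ.surjective θ
      obtain ⟨x, rfl⟩ := Quotient.exists_rep a
      simpa using congrFun (DFunLike.congr_fun he x) i
    rfl
  · rintro ⟨e, rfl⟩
    have hσ : Bijective fun i => (⟨coordKer e i, mem_coordKers.2 ⟨i, rfl⟩⟩ : coordKers e) :=
      ⟨fun i j hij => coordKer_injective e (congrArg Subtype.val hij),
        fun ⟨θ, hθ⟩ => (mem_coordKers.1 hθ).imp fun _ hi => Subtype.ext hi⟩
    set σ := Equiv.ofBijective _ hσ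
    have hσθ (θ : coordKers e) : coordKer e (σ.symm θ) = θ.1 :=
      congrArg Subtype.val (σ.apply_symm_apply θ)
    refine ⟨⟨σ, fun θ => (Quotient.congrRight fun x y => by rw [← hσθ θ]).trans
      (quotientCoordKerEquiv e (σ.symm θ))⟩, Subtype.ext (Equiv.ext fun x => funext fun i => ?_)⟩
    show quotientCoordKerEquiv e (σ.symm (σ i)) (Quotient.mk _ x) = e x i
    rw [quotientCoordKerEquiv_mk, σ.symm_apply_apply]

end factorEquiv

theorem card_fiber_coordKers [Fintype X] [Fintype ι] [Fintype α] [Nontrivial α]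
    {S : Finset (Setoid X)} (hS : S ∈ factorTuples X (Fintype.card α) (Fintype.card ι)) :
    Fintype.card {e : X ≃ (ι → α) // coordKers e = S} =
      (Fintype.card ι)! * (Fintype.card α)! ^ Fintype.card ι := by
  obtain ⟨hcard, hclasses, hbij⟩ := hS
  have hquot (θ : S) : Fintype.card (Quotient θ.1) = Fintype.card α := by
    rw [← Nat.card_eq_fintype_card, Nat.card_congr (Setoid.quotientEquivClasses θ.1),
      Nat.card_coe_set_eq, hclasses θ θ.2]
  rw [← Fintype.card_congr (Equiv.ofBijective _ (bijective_factorEquiv hbij)), Fintype.card_prod,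
    Fintype.card_pi, Fintype.card_equiv (Fintype.equivOfCardEq (by simp [hcard]))]
  simp [Fintype.card_equiv (Fintype.equivOfCardEq (hquot _)), hquot, hcard]

theorem card_factorTuples_mul [Fintype X] [Fintype ι] [Fintype α] [Nontrivial α]
    (hX : Fintype.card X = Fintype.card α ^ Fintype.card ι) :
    Fintype.card (factorTuples X (Fintype.card α) (Fintype.card ι)) *
      ((Fintype.card ι)! * (Fintype.card α)! ^ Fintype.card ι) = (Fintype.card X)! := by
  have hcount := Fintype.card_eq_card_mul_of_card_fiber
    (fun e : X ≃ (ι → α) => (⟨coordKers e, coordKers_mem_factorTuples e⟩ :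
      factorTuples X (Fintype.card α) (Fintype.card ι)))
    fun S => (Fintype.card_congr (Equiv.subtypeEquivRight fun _ => Subtype.ext_iff)).trans
      (card_fiber_coordKers S.2)
  rw [← hcount, Fintype.card_equiv (Fintype.equivOfCardEq (by simp [hX]))]

end

theorem stmt_7 {X : Type*} [Fintype X] (p k : ℕ) (hp : p.Prime)
    (hX : Fintype.card X = p ^ k) :
    {S : Finset (Setoid X) | S.card = k ∧ (∀ θ ∈ S, θ.classes.ncard = p) ∧
        Function.Bijective (fun x : X => fun θ : S => Quotient.mk θ.1 x)}.ncard =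
      (p ^ k).factorial / (k.factorial * p.factorial ^ k) := by
  have : Nontrivial (Fin p) := Fin.nontrivial_iff_two_le.2 hp.two_le
  have h := card_factorTuples_mul (X := X) (ι := Fin k) (α := Fin p) (by simpa using hX)
  simp only [Fintype.card_fin, hX] at h
  change Nat.card (factorTuples X p k) = _
  rw [Nat.card_eq_fintype_card]
  exact Nat.eq_div_of_mul_eq_left (by positivity) h
end

section
/- Let X be a finite set with |X| = p^k for a prime p, and fix an equivalence relation θ₁ on X that is the first member of some factor k-tuple in which every relation has p blocks. Then the number of factor k-tuples extending θ₁ to a second coordinate θ₂ with p blocks is (1/p!) · (p^{k-1}! / (p^{k-2}!)^p)^p. -/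
open Function Set

lemma card_fiber_eq' {E F : Type*} (Φ : E → F) (f : F) :
    Nat.card {x // Φ x = f} = Nat.card (Φ ⁻¹' {f}) :=
  Nat.card_congr (Equiv.subtypeEquivRight (fun x => by simp))

lemma card_of_const_fibers' {E F : Type*} [Finite E] [Finite F] (Φ : E → F) (c : ℕ)
    (hf : ∀ f, Nat.card (Φ ⁻¹' {f}) = c) : Nat.card E = Nat.card F * c := by
  classical
  have : Fintype E := Fintype.ofFinite E
  have : Fintype F := Fintype.ofFinite F
  calc Nat.card E = Nat.card ((f : F) × {x // Φ x = f}) :=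
        (Nat.card_congr (Equiv.sigmaFiberEquiv Φ)).symm
    _ = Nat.card F * c := by
        rw [Nat.card_eq_fintype_card, Fintype.card_sigma]
        have h : ∀ f : F, Fintype.card {x // Φ x = f} = c := fun f => by
          rw [← Nat.card_eq_fintype_card, card_fiber_eq', hf f]
        simp [h, Nat.card_eq_fintype_card, mul_comm]

def prodFstEquiv' {β γ : Type*} (i : β) : {x : β × γ // x.1 = i} ≃ γ where
  toFun x := x.1.2
  invFun c := ⟨(i, c), rfl⟩
  left_inv := by rintro ⟨⟨b, c⟩, h⟩; subst h; rfl
  right_inv c := rfl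

lemma balanced_count' {α : Type*} [Finite α] (p m : ℕ) (h : Nat.card α = p * m) :
    Nat.card {f : α → Fin p // ∀ i, Nat.card (f ⁻¹' {i} : Set α) = m} * m.factorial ^ p
      = (p * m).factorial := by
  classical
  have : Fintype α := Fintype.ofFinite α
  have e0 : α ≃ Fin p × Fin m := (Finite.equivFinOfCardEq h).trans finProdFinEquiv.symm
  set T := {f : α → Fin p // ∀ i, Nat.card (f ⁻¹' {i} : Set α) = m} with hT
  have hfib : ∀ (e : α ≃ Fin p × Fin m) (i : Fin p),
      Nat.card ((fun a => (e a).1) ⁻¹' {i} : Set α) = m := by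
    intro e i
    rw [← card_fiber_eq']
    have e1 : {a // (e a).1 = i} ≃ {x : Fin p × Fin m // x.1 = i} :=
      e.subtypeEquiv (fun a => Iff.rfl)
    rw [Nat.card_congr (e1.trans (prodFstEquiv' i))]
    simp
  let Φ : (α ≃ Fin p × Fin m) → T := fun e => ⟨fun a => (e a).1, hfib e⟩
  have key : ∀ f : T, Nat.card (Φ ⁻¹' {f}) = m.factorial ^ p := by
    intro ⟨f, hf⟩
    rw [← card_fiber_eq']
    have efib : {e : α ≃ Fin p × Fin m // Φ e = ⟨f, hf⟩} ≃
        ∀ i : Fin p, ({a // f a = i} ≃ Fin m) := by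
      refine ⟨fun e i => ?_, fun σ => ?_, ?_, ?_⟩
      · have he : ∀ a, (e.1 a).1 = f a := fun a => congrFun (congrArg Subtype.val e.2) a
        exact ⟨fun a => (e.1 a.1).2, fun j => ⟨e.1.symm (i, j), by
            rw [← he]; simp⟩,
          fun a => by
            apply Subtype.ext
            have h3 : ((i : Fin p), (e.1 a.1).2) = e.1 a.1 :=
              Prod.ext (by rw [he a.1, a.2]) rfl
            show e.1.symm (i, (e.1 a.1).2) = a.1
            rw [h3, Equiv.symm_apply_apply],
          fun j => by simp⟩
      · refine ⟨((Equiv.sigmaFiberEquiv f).symm.trans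
          ((Equiv.sigmaCongrRight σ).trans (Equiv.sigmaEquivProd (Fin p) (Fin m)))), ?_⟩
        apply Subtype.ext
        funext a
        rfl
      · rintro ⟨e, he⟩
        apply Subtype.ext
        apply Equiv.ext
        intro a
        have he' : ∀ a, (e a).1 = f a := fun a => congrFun (congrArg Subtype.val he) a
        show (f a, (e a).2) = e a
        rw [← he' a]
      · intro σ
        funext i
        apply Equiv.ext
        rintro ⟨a, ha⟩
        subst ha
        rfl
    rw [Nat.card_congr efib, Nat.card_pi]
    have hfac : ∀ i : Fin p, Nat.card ({a // f a = i} ≃ Fin m) = m.factorial := by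
      intro i
      have heq : {a // f a = i} ≃ Fin m :=
        Finite.equivFinOfCardEq (by rw [card_fiber_eq']; exact hf i)
      have : Fintype {a // f a = i} := Fintype.ofFinite _
      rw [Nat.card_eq_fintype_card, Fintype.card_equiv heq]
      congr 1
      rw [← Nat.card_eq_fintype_card, card_fiber_eq']
      exact hf i
    simp only [Nat.card_eq_fintype_card] at hfac ⊢
    simp [hfac]
  have h2 := card_of_const_fibers' Φ (m.factorial ^ p) key
  rw [Nat.card_eq_fintype_card, Fintype.card_equiv e0, ← Nat.card_eq_fintype_card, h] at h2
  exact h2.symm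

lemma card_set_eq_sum_fibers' {X Y : Type*} [Finite X] [Fintype Y] (f : X → Y) (A : Set X) :
    Nat.card A = ∑ y : Y, (A ∩ f ⁻¹' {y}).ncard := by
  classical
  calc Nat.card A = Nat.card ((y : Y) × {a : A // f a.1 = y}) :=
        (Nat.card_congr (Equiv.sigmaFiberEquiv (fun a : A => f a.1))).symm
    _ = ∑ y : Y, (A ∩ f ⁻¹' {y}).ncard := by
        have : Fintype A := Fintype.ofFinite _
        rw [Nat.card_eq_fintype_card, Fintype.card_sigma]
        congr 1
        funext y
        have e : {a : A // f a.1 = y} ≃ ↥(A ∩ f ⁻¹' {y}) :=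
          ⟨fun a => ⟨a.1.1, a.1.2, a.2⟩, fun x => ⟨⟨x.1, x.2.1⟩, x.2.2⟩,
            fun _ => rfl, fun _ => rfl⟩
        rw [← Nat.card_coe_set_eq, ← Nat.card_congr e, Nat.card_eq_fintype_card]

lemma classes_eq_range' {X : Type*} (θ : Setoid X) :
    θ.classes = Set.range (fun q : Quotient θ => Quotient.mk θ ⁻¹' {q}) := by
  ext s
  constructor
  · rintro ⟨y, rfl⟩
    exact ⟨Quotient.mk θ y, by ext x; simp [Quotient.eq]⟩
  · rintro ⟨q, rfl⟩
    obtain ⟨y, rfl⟩ := Quotient.exists_rep q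
    exact ⟨y, by ext x; simp [Quotient.eq]⟩

lemma quot_card' {X : Type*} [Finite X] (θ : Setoid X) :
    Nat.card (Quotient θ) = θ.classes.ncard := by
  rw [Nat.card_congr (Setoid.quotientEquivClasses θ), Nat.card_coe_set_eq]

lemma fiber_card' {X : Type*} [Finite X] {p k : ℕ} (t : Fin k → Setoid X)
    (hcl : ∀ i, (t i).classes.ncard = p)
    (hbij : Function.Bijective (fun x : X => fun i : Fin k => Quotient.mk (t i) x))
    (i₀ : Fin k) (q : Quotient (t i₀)) :
    Nat.card ((Quotient.mk (t i₀)) ⁻¹' {q}) = p ^ (k - 1) := by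
  classical
  have hQ : ∀ i, Nat.card (Quotient (t i)) = p := fun i => by rw [quot_card']; exact hcl i
  let b : X ≃ ∀ i, Quotient (t i) := Equiv.ofBijective _ hbij
  have e1 : ((Quotient.mk (t i₀)) ⁻¹' {q} : Set X) ≃ {g : ∀ i, Quotient (t i) // g i₀ = q} :=
    b.subtypeEquiv (fun x => by
      show Quotient.mk (t i₀) x = q ↔ b x i₀ = q
      rfl)
  have e2 : {g : ∀ i, Quotient (t i) // g i₀ = q} ≃
      {x : Quotient (t i₀) × (∀ j : {j : Fin k // j ≠ i₀}, Quotient (t j.1)) // x.1 = q} :=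
    (Equiv.piSplitAt i₀ (fun i => Quotient (t i))).subtypeEquiv (fun g => Iff.rfl)
  rw [Nat.card_congr ((e1.trans e2).trans (prodFstEquiv' q)), Nat.card_pi]
  have : ∀ j : {j : Fin k // j ≠ i₀}, Nat.card (Quotient (t j.1)) = p := fun j => hQ j.1
  simp only [this, Finset.prod_const, Finset.card_univ]
  congr 1
  rw [Fintype.card_subtype_compl, Fintype.card_subtype_eq, Fintype.card_fin]

lemma main_count' {X : Type*} [Finite X] {p b : ℕ} (hp : 0 < p) (hb : 0 < b)
    (θ : Setoid X) (hQ : Nat.card (Quotient θ) = p)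
    (hfib : ∀ q : Quotient θ, Nat.card ((Quotient.mk θ) ⁻¹' {q}) = p * b) :
    {θ₂ : Setoid X | θ₂.classes.ncard = p ∧ (∀ c ∈ θ₂.classes, c.ncard = p * b) ∧
        ∀ c ∈ θ₂.classes, ∀ d ∈ θ.classes, (c ∩ d).ncard = b}.ncard *
      (b.factorial ^ (p * p) * p.factorial) = ((p * b).factorial) ^ p := by
  classical
  have instQ : Fintype (Quotient θ) := Fintype.ofFinite _
  have hQF : Fintype.card (Quotient θ) = p := by rw [← Nat.card_eq_fintype_card]; exact hQ
  have finSetoid : Finite (Setoid X) :=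
    Finite.of_injective (fun s : Setoid X => s.r)
      (fun s₁ s₂ h => Setoid.ext (fun a c => iff_of_eq (congrFun (congrFun h a) c)))
  set S := {θ₂ : Setoid X | θ₂.classes.ncard = p ∧ (∀ c ∈ θ₂.classes, c.ncard = p * b) ∧
      ∀ c ∈ θ₂.classes, ∀ d ∈ θ.classes, (c ∩ d).ncard = b} with hS
  let Fib : Quotient θ → Type _ := fun q => {x : X // Quotient.mk θ x = q}
  let P : (X → Fin p) → Prop := fun F => ∀ (i : Fin p) (q : Quotient θ),
    ((F ⁻¹' {i}) ∩ (Quotient.mk θ ⁻¹' {q})).ncard = b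
  let O := {F : X → Fin p // P F}
  have cardFib : ∀ q, Nat.card (Fib q) = p * b := fun q => by
    rw [show Nat.card (Fib q) = Nat.card ((Quotient.mk θ) ⁻¹' {q}) from
      card_fiber_eq' (Quotient.mk θ) q]
    exact hfib q
  -- key card identity for sub-fibers
  have keycard : ∀ (F : X → Fin p) (q : Quotient θ) (i : Fin p),
      Nat.card ((fun x : Fib q => F x.1) ⁻¹' {i} : Set (Fib q)) =
        ((F ⁻¹' {i}) ∩ (Quotient.mk θ ⁻¹' {q})).ncard := by
    intro F q i
    rw [← card_fiber_eq', ← Nat.card_coe_set_eq]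
    exact Nat.card_congr ⟨fun a => ⟨a.1.1, a.2, a.1.2⟩, fun x => ⟨⟨x.1, x.2.2⟩, x.2.1⟩,
      fun _ => rfl, fun _ => rfl⟩
  -- the equivalence for O
  have eO : O ≃ ∀ q : Quotient θ,
      {f : Fib q → Fin p // ∀ i, Nat.card (f ⁻¹' {i} : Set (Fib q)) = b} := by
    refine (Equiv.subtypeEquiv
      ((Equiv.arrowCongr (Equiv.sigmaFiberEquiv (Quotient.mk θ)).symm
        (Equiv.refl (Fin p))).trans (Equiv.piCurry fun _ _ => Fin p)) ?_).trans
      Equiv.subtypePiEquivPi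
    intro F
    show P F ↔ ∀ q i, Nat.card ((fun x : Fib q => F x.1) ⁻¹' {i} : Set (Fib q)) = b
    constructor
    · intro h q i; rw [keycard]; exact h i q
    · intro h i q; rw [← keycard]; exact h q i
  have cardO : Nat.card O * (b.factorial ^ p) ^ p = ((p * b).factorial) ^ p := by
    rw [Nat.card_congr eO, Nat.card_pi]
    have hq : ∀ q : Quotient θ,
        Nat.card {f : Fib q → Fin p // ∀ i, Nat.card (f ⁻¹' {i} : Set (Fib q)) = b} *
          b.factorial ^ p = (p * b).factorial := fun q => balanced_count' p b (cardFib q)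
    calc (∏ q : Quotient θ, Nat.card
          {f : Fib q → Fin p // ∀ i, Nat.card (f ⁻¹' {i} : Set (Fib q)) = b}) *
            (b.factorial ^ p) ^ p
        = ∏ q : Quotient θ, (Nat.card
            {f : Fib q → Fin p // ∀ i, Nat.card (f ⁻¹' {i} : Set (Fib q)) = b} *
              b.factorial ^ p) := by
          rw [Finset.prod_mul_distrib, Finset.prod_const, Finset.card_univ, hQF]
      _ = ∏ _q : Quotient θ, (p * b).factorial := Finset.prod_congr rfl (fun q _ => hq q)
      _ = ((p * b).factorial) ^ p := by rw [Finset.prod_const, Finset.card_univ, hQF]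
  -- membership of kernels in S
  have hfibF : ∀ F : O, ∀ i, Nat.card (F.1 ⁻¹' {i}) = p * b := by
    intro F i
    rw [card_set_eq_sum_fibers' (Quotient.mk θ) (F.1 ⁻¹' {i}),
      Finset.sum_congr rfl (fun q _ => F.2 i q), Finset.sum_const, Finset.card_univ, hQF,
      smul_eq_mul]
  have hne : ∀ F : O, ∀ i, (F.1 ⁻¹' {i}).Nonempty := by
    intro F i
    apply Set.nonempty_of_ncard_ne_zero
    rw [← Nat.card_coe_set_eq, hfibF F i]
    positivity
  have hsurj : ∀ F : O, Surjective F.1 := fun F i => hne F i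
  have hclasses : ∀ F : O, (Setoid.ker F.1).classes = Set.range (fun i : Fin p => F.1 ⁻¹' {i}) := by
    intro F
    ext s
    constructor
    · rintro ⟨y, rfl⟩
      exact ⟨F.1 y, by ext x; simp [Setoid.ker_def]⟩
    · rintro ⟨i, rfl⟩
      obtain ⟨y, hy⟩ := hsurj F i
      exact ⟨y, by ext x; simp [Setoid.ker_def, hy]⟩
  have memS : ∀ F : O, Setoid.ker F.1 ∈ S := by
    intro F
    have hinj : Injective (fun i : Fin p => F.1 ⁻¹' {i}) := by
      intro i j h
      obtain ⟨x, hx⟩ := hne F i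
      have hset : F.1 ⁻¹' {i} = F.1 ⁻¹' {j} := h
      have hx' : x ∈ F.1 ⁻¹' {j} := hset ▸ hx
      have h1 : F.1 x = i := hx
      have h2 : F.1 x = j := hx'
      rw [← h1, ← h2]
    refine ⟨?_, ?_, ?_⟩
    · rw [hclasses F, ← Nat.card_coe_set_eq, Nat.card_range_of_injective hinj,
        Nat.card_eq_fintype_card, Fintype.card_fin]
    · intro c hc
      rw [hclasses F] at hc
      obtain ⟨i, rfl⟩ := hc
      rw [← Nat.card_coe_set_eq]
      exact hfibF F i
    · intro c hc d hd
      rw [hclasses F] at hc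
      obtain ⟨i, rfl⟩ := hc
      rw [classes_eq_range'] at hd
      obtain ⟨q, rfl⟩ := hd
      exact F.2 i q
  let Ψ : O → ↥S := fun F => ⟨Setoid.ker F.1, memS F⟩
  -- fibers of Ψ
  have hΨfib : ∀ s : ↥S, Nat.card (Ψ ⁻¹' {s}) = p.factorial := by
    rintro ⟨θ₂, h₂⟩
    have hQ2 : Nat.card (Quotient θ₂) = p := by rw [quot_card']; exact h₂.1
    have instQ2 : Fintype (Quotient θ₂) := Fintype.ofFinite _
    rw [← card_fiber_eq']
    have hker : ∀ F : {F : O // Ψ F = ⟨θ₂, h₂⟩}, Setoid.ker F.1.1 = θ₂ :=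
      fun F => congrArg Subtype.val F.2
    let fwd : {F : O // Ψ F = ⟨θ₂, h₂⟩} → (Quotient θ₂ → Fin p) := fun F =>
      Quotient.lift F.1.1 (fun a c hac => by
        rw [← hker F] at hac; exact hac)
    have hbij2 : ∀ F, Bijective (fwd F) := by
      intro F
      rw [Nat.bijective_iff_injective_and_card]
      constructor
      · intro q q' h
        induction q using Quotient.ind
        induction q' using Quotient.ind
        exact Quotient.sound (show θ₂ _ _ by rw [← hker F]; exact h)
      · rw [hQ2, Nat.card_eq_fintype_card, Fintype.card_fin]
    have hPbwd : ∀ g : Quotient θ₂ ≃ Fin p, P (fun x => g (Quotient.mk θ₂ x)) := by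
      intro g i q'
      have h1 : (fun x => g (Quotient.mk θ₂ x)) ⁻¹' {i} = Quotient.mk θ₂ ⁻¹' {g.symm i} := by
        ext x
        simp [Equiv.apply_eq_iff_eq_symm_apply]
      rw [h1]
      exact h₂.2.2 _ (by rw [classes_eq_range']; exact ⟨_, rfl⟩) _
        (by rw [classes_eq_range']; exact ⟨q', rfl⟩)
    have hkerbwd : ∀ g : Quotient θ₂ ≃ Fin p,
        Ψ ⟨fun x => g (Quotient.mk θ₂ x), hPbwd g⟩ = ⟨θ₂, h₂⟩ := by
      intro g
      apply Subtype.ext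
      show Setoid.ker (fun x => g (Quotient.mk θ₂ x)) = θ₂
      apply Setoid.ext
      intro a c
      rw [Setoid.ker_def, g.injective.eq_iff, Quotient.eq]
    have efib : {F : O // Ψ F = ⟨θ₂, h₂⟩} ≃ (Quotient θ₂ ≃ Fin p) := by
      refine ⟨fun F => Equiv.ofBijective (fwd F) (hbij2 F),
        fun g => ⟨⟨fun x => g (Quotient.mk θ₂ x), hPbwd g⟩, hkerbwd g⟩, ?_, ?_⟩
      · rintro ⟨⟨F, hF⟩, hF2⟩
        apply Subtype.ext
        apply Subtype.ext
        funext x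
        rfl
      · intro g
        apply Equiv.ext
        intro q
        induction q using Quotient.ind
        rfl
    rw [Nat.card_congr efib, Nat.card_eq_fintype_card,
      Fintype.card_equiv (Finite.equivFinOfCardEq hQ2), ← Nat.card_eq_fintype_card, hQ2]
  have main : Nat.card O = Nat.card ↥S * p.factorial := card_of_const_fibers' Ψ _ hΨfib
  rw [← Nat.card_coe_set_eq, pow_mul]
  calc Nat.card ↥S * ((b.factorial ^ p) ^ p * p.factorial)
      = Nat.card ↥S * p.factorial * (b.factorial ^ p) ^ p := by ring
    _ = Nat.card O * (b.factorial ^ p) ^ p := by rw [main]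
    _ = ((p * b).factorial) ^ p := cardO

theorem stmt_8 {X : Type*} [Fintype X] (p k : ℕ) (hp : p.Prime) (hk : 2 ≤ k)
    (hX : Fintype.card X = p ^ k) (θ₁ : Setoid X)
    (hθ₁ : ∃ t : Fin k → Setoid X, t ⟨0, by omega⟩ = θ₁ ∧
        (∀ i, (t i).classes.ncard = p) ∧
        Function.Bijective (fun x : X => fun i : Fin k => Quotient.mk (t i) x)) :
    {θ₂ : Setoid X | θ₂.classes.ncard = p ∧ (∀ c ∈ θ₂.classes, c.ncard = p ^ (k - 1)) ∧
        ∀ c ∈ θ₂.classes, ∀ d ∈ θ₁.classes, (c ∩ d).ncard = p ^ (k - 2)}.ncard =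
      (p ^ (k - 1)).factorial ^ p / ((p ^ (k - 2)).factorial ^ (p * p) * p.factorial) := by
  classical
  obtain ⟨t, ht0, hcl, hbij⟩ := hθ₁
  have hk0 : 0 < k := by omega
  obtain rfl : t ⟨0, hk0⟩ = θ₁ := ht0
  have hpow : p * p ^ (k - 2) = p ^ (k - 1) := by
    rw [← pow_succ']
    congr 1
    omega
  have hQ : Nat.card (Quotient (t ⟨0, hk0⟩)) = p := by
    rw [quot_card']; exact hcl _
  have hfib : ∀ q : Quotient (t ⟨0, hk0⟩),
      Nat.card ((Quotient.mk (t ⟨0, hk0⟩)) ⁻¹' {q}) = p * p ^ (k - 2) := by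
    intro q
    rw [hpow]
    exact fiber_card' t hcl hbij _ q
  have key := main_count' hp.pos (pow_pos hp.pos (k - 2)) (t ⟨0, hk0⟩) hQ hfib
  rw [hpow] at key
  exact (Nat.div_eq_of_eq_mul_left
    (Nat.mul_pos (pow_pos (Nat.factorial_pos _) _) (Nat.factorial_pos p)) key.symm).symm
end

section
/- Let V = (Z/2)³ viewed as a vector space over Z/2. Then the orthomodular poset Fact V has exactly 28 atoms and 28 maximal Boolean subalgebras, each maximal Boolean subalgebra has exactly 3 atoms, and each atom lies in exactly 3 maximal Boolean subalgebras. -/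
/-!
Over `ZMod 2` an atom `(S, T)` of `Fact V` is the same as a pair `(v, f)` of a vector and a linear
form with `f v = 1`, via `S = span {v}` and `T = ker f`; in `(ZMod 2)³` there are `7 · 4 = 28` such
pairs. A maximal Boolean subalgebra is a set `B` of three lines spanning `V`; these lines are
independent, so the atoms of `B` are the three pairs `(L, sum of the other two lines)`. An atom
`(S, T)` lies in the blocks `{S} ∪ P` with `P` any two of the three lines of the plane `T`, hence in
three blocks. Double counting atom–block incidences shows that there are as many blocks as atoms.
-/

open Module Submodule

section Field

variable {K V : Type*} [Field K] [AddCommGroup V] [Module K V]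

variable (K V) in
/-- The atoms of the orthomodular poset `Fact V` of pairs of complementary subspaces. -/
def factAtoms : Set (Submodule K V × Submodule K V) :=
  {ST | ST.1 ⊓ ST.2 = ⊥ ∧ ST.1 ⊔ ST.2 = ⊤ ∧ finrank K ST.1 = 1}

def linesIn (T : Submodule K V) : Set (Submodule K V) :=
  {W | finrank K W = 1 ∧ W ≤ T}

variable (K V) in
/-- Sets of `dim V` lines spanning `V`. They index the maximal Boolean subalgebras of `Fact V`,
the atoms of the subalgebra of `B` being the pairs `(L, sSup (B \ {L}))` with `L ∈ B`. -/
def lineFrames : Set (Set (Submodule K V)) :=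
  {B | B.ncard = finrank K V ∧ (∀ W ∈ B, finrank K W = 1) ∧ sSup B = ⊤}

theorem not_le_of_mem_factAtoms {ST : Submodule K V × Submodule K V}
    (hST : ST ∈ factAtoms K V) : ¬ST.1 ≤ ST.2 := fun hle => by
  obtain ⟨hinf, -, hS⟩ := hST
  rw [inf_eq_left.2 hle] at hinf
  rw [hinf, finrank_bot] at hS
  exact zero_ne_one hS

variable [FiniteDimensional K V]

theorem exists_eq_span_singleton_of_finrank_eq_one {W : Submodule K V} (h : finrank K W = 1) :
    ∃ v ≠ 0, W = K ∙ v := by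
  obtain ⟨v, rfl⟩ := (finrank_le_one_iff_isPrincipal W).1 h.le
  refine ⟨v, ?_, rfl⟩
  rintro rfl
  rw [span_zero_singleton, finrank_bot] at h
  exact zero_ne_one h

theorem isCompl_span_singleton_ker {v : V} {f : Dual K V} (h : f v = 1) :
    IsCompl (K ∙ v) (LinearMap.ker f) := by
  have hv : v ≠ 0 := ne_zero_of_map (h ▸ one_ne_zero)
  refine (Dual.isCompl_ker_of_disjoint_of_ne_bot (fun hf => by simp [hf] at h) ?_ ?_).symm
  · rw [disjoint_span_singleton' hv]
    simp [h]
  · simpa using hv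

theorem exists_eq_span_singleton_eq_ker_of_isCompl {S T : Submodule K V} (h : IsCompl S T)
    (hS : finrank K S = 1) : ∃ v, ∃ f : Dual K V, f v = 1 ∧ S = K ∙ v ∧ T = LinearMap.ker f := by
  obtain ⟨v, hv, rfl⟩ := exists_eq_span_singleton_of_finrank_eq_one hS
  let e := LinearEquiv.toSpanNonzeroSingleton K V v hv
  refine ⟨v, e.symm.toLinearMap ∘ₗ (K ∙ v).projectionOnto T h, ?_, rfl, ?_⟩
  · have := projectionOnto_apply_left h ⟨v, mem_span_singleton_self v⟩
    rw [LinearMap.comp_apply, this, ← LinearEquiv.toSpanNonzeroSingleton_one K V v hv]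
    exact e.symm_apply_apply 1
  · rw [LinearEquiv.ker_comp, ker_projectionOnto]

theorem finrank_snd_add_one_of_mem_factAtoms {ST : Submodule K V × Submodule K V}
    (hST : ST ∈ factAtoms K V) : finrank K ST.2 + 1 = finrank K V := by
  rw [← finrank_add_eq_of_isCompl (IsCompl.of_eq hST.1 hST.2.1), hST.2.2, add_comm]

theorem factAtoms_eq_image :
    factAtoms K V =
      (fun p : V × Dual K V => (K ∙ p.1, LinearMap.ker p.2)) '' {p | p.2 p.1 = 1} := by
  ext ⟨S, T⟩
  constructor
  · rintro ⟨hinf, hsup, hS⟩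
    obtain ⟨v, f, hf, rfl, rfl⟩ := exists_eq_span_singleton_eq_ker_of_isCompl (.of_eq hinf hsup) hS
    exact ⟨(v, f), hf, rfl⟩
  · rintro ⟨⟨v, f⟩, hf, ⟨⟩⟩
    have h := isCompl_span_singleton_ker hf
    exact ⟨h.inf_eq_bot, h.sup_eq_top, finrank_span_singleton (ne_zero_of_map (hf ▸ one_ne_zero))⟩

theorem finrank_sSup_le_ncard {s : Set (Submodule K V)} (hs : s.Finite)
    (h : ∀ W ∈ s, finrank K W ≤ 1) : finrank K ↥(sSup s) ≤ s.ncard := by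
  induction s, hs using Set.Finite.induction_on with
  | empty => simp
  | @insert W s hWs hs ih =>
    rw [sSup_insert, Set.ncard_insert_of_notMem hWs hs, add_comm]
    grw [finrank_add_le_finrank_add_finrank, h W (s.mem_insert W),
      ih fun U hU => h U (Set.mem_insert_of_mem W hU)]

theorem isCompl_sSup_diff_singleton {B : Set (Submodule K V)} (hB : B ∈ lineFrames K V)
    {L : Submodule K V} (hL : L ∈ B) : IsCompl L (sSup (B \ {L})) := by
  obtain ⟨hcard, hlines, htop⟩ := hB
  have hpos : 0 < finrank K V := (hlines L hL).symm.trans_le (finrank_le L)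
  have hfin : B.Finite := Set.finite_of_ncard_pos (hcard ▸ hpos)
  have hsup : L ⊔ sSup (B \ {L}) = ⊤ := by
    rw [← sSup_insert, Set.insert_sdiff_singleton, Set.insert_eq_of_mem hL, htop]
  refine .of_eq ?_ hsup
  have hle := finrank_sSup_le_ncard (hfin.sdiff (t := {L})) fun W hW => (hlines W hW.1).le
  have := finrank_sup_add_finrank_inf_eq L (sSup (B \ {L}))
  rw [hsup, finrank_top, hlines L hL] at this
  rw [Set.ncard_sdiff_singleton_of_mem hL, hcard] at hle
  exact Submodule.finrank_eq_zero.1 (by omega)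

theorem ncard_factAtoms_of_mem_lineFrames {B : Set (Submodule K V)} (hB : B ∈ lineFrames K V) :
    {ST ∈ factAtoms K V | ST.1 ∈ B ∧ ST.2 = sSup (B \ {ST.1})}.ncard = finrank K V := by
  have hset : {ST ∈ factAtoms K V | ST.1 ∈ B ∧ ST.2 = sSup (B \ {ST.1})} =
      (fun L => (L, sSup (B \ {L}))) '' B := by
    ext ⟨S, T⟩
    constructor
    · rintro ⟨-, hS, hT⟩
      exact ⟨S, hS, Prod.ext rfl hT.symm⟩
    · rintro ⟨L, hL, he⟩
      obtain ⟨rfl, rfl⟩ := Prod.mk.inj he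
      have h := isCompl_sSup_diff_singleton hB hL
      exact ⟨⟨h.inf_eq_bot, h.sup_eq_top, hB.2.1 L hL⟩, hL, rfl⟩
  rw [hset, Set.InjOn.ncard_image fun _ _ _ _ h => congrArg Prod.fst h, hB.1]

theorem sSup_eq_of_ncard_eq_two {T : Submodule K V} (hT : finrank K T = 2)
    {P : Set (Submodule K V)} (hP : P ⊆ linesIn T) (hcard : P.ncard = 2) :
    sSup P = T := by
  obtain ⟨W₁, W₂, hne, rfl⟩ := Set.ncard_eq_two.1 hcard
  obtain ⟨h₁, hle₁⟩ := hP (Set.mem_insert W₁ {W₂})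
  obtain ⟨h₂, hle₂⟩ := hP (Set.mem_insert_of_mem W₁ rfl)
  have hinf : W₁ ⊓ W₂ = ⊥ := (IsAtom.disjoint_of_ne (isAtom_iff_finrank_eq_one.2 h₁)
    (isAtom_iff_finrank_eq_one.2 h₂) hne).eq_bot
  have hsup := finrank_sup_add_finrank_inf_eq W₁ W₂
  rw [hinf, finrank_bot, h₁, h₂] at hsup
  rw [sSup_pair]
  exact eq_of_le_of_finrank_eq (sup_le hle₁ hle₂) (by omega)

theorem lineFrames_through_eq_image_insert (hV : finrank K V = 3)
    {ST : Submodule K V × Submodule K V} (hST : ST ∈ factAtoms K V) :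
    {B ∈ lineFrames K V | ST.1 ∈ B ∧ sSup (B \ {ST.1}) = ST.2} =
      insert ST.1 '' {P | P ⊆ linesIn ST.2 ∧ P.ncard = 2} := by
  have hT : finrank K ST.2 = 2 := by
    have := finrank_snd_add_one_of_mem_factAtoms hST
    omega
  obtain ⟨hinf, hsup, hS⟩ := hST
  ext B
  constructor
  · rintro ⟨⟨hcard, hlines, -⟩, hSB, hBT⟩
    refine ⟨B \ {ST.1}, ⟨fun W hW => ⟨hlines W hW.1, hBT ▸ le_sSup hW⟩, ?_⟩,
      Set.insert_sdiff_self_of_mem hSB⟩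
    rw [Set.ncard_sdiff_singleton_of_mem hSB, hcard, hV]
  · rintro ⟨P, ⟨hPT, hcard⟩, rfl⟩
    have hSP : ST.1 ∉ P := fun h => not_le_of_mem_factAtoms ⟨hinf, hsup, hS⟩ (hPT h).2
    have hPT' := sSup_eq_of_ncard_eq_two hT hPT hcard
    refine ⟨⟨?_, ?_, ?_⟩, Set.mem_insert ST.1 P, ?_⟩
    · rw [Set.ncard_insert_of_notMem hSP (Set.finite_of_ncard_pos (by omega)), hcard, hV]
    · rintro W (rfl | hW)
      exacts [hS, (hPT hW).1]
    · rw [sSup_insert, hPT', hsup]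
    · rw [Set.insert_sdiff_self_of_notMem hSP, hPT']

end Field

theorem ncard_apply_eq_one_pi {K ι : Type*} [Field K] [Fintype ι] [DecidableEq ι] :
    {p : (ι → K) × Dual K (ι → K) | p.2 p.1 = 1}.ncard =
      {p : (ι → K) × (ι → K) | p.2 ⬝ᵥ p.1 = 1}.ncard := by
  have hsurj : Function.Surjective (dotProductBilin K K : (ι → K) →ₗ[K] Dual K (ι → K)) := by
    intro f
    refine ⟨fun i => f (Pi.single i 1), LinearMap.pi_ext fun i c => ?_⟩
    have : Pi.single i c = c • Pi.single i (1 : K) := by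
      rw [← Pi.single_smul', smul_eq_mul, mul_one]
    simp [this, mul_comm]
  have hinj : Function.Injective (dotProductBilin K K : (ι → K) →ₗ[K] Dual K (ι → K)) := by
    intro w w' h
    funext i
    simpa using LinearMap.congr_fun h (Pi.single i 1)
  have himage : {p : (ι → K) × Dual K (ι → K) | p.2 p.1 = 1} =
      Prod.map id (dotProductBilin K K) '' {p | p.2 ⬝ᵥ p.1 = 1} := by
    ext ⟨v, f⟩
    obtain ⟨w, rfl⟩ := hsurj f
    simp [hinj.eq_iff]
  rw [himage, Set.ncard_image_of_injective _ (Function.injective_id.prodMap hinj)]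

theorem Set.ncard_mul_eq_ncard_mul {α β : Type*} {s : Set α} {t : Set β} (hs : s.Finite)
    (ht : t.Finite) (r : α → β → Prop) {m n : ℕ} (hm : ∀ a ∈ s, {b ∈ t | r a b}.ncard = m)
    (hn : ∀ b ∈ t, {a ∈ s | r a b}.ncard = n) : s.ncard * m = t.ncard * n := by
  classical
  lift s to Finset α using hs
  lift t to Finset β using ht
  simp only [Set.ncard_coe_finset]
  refine Finset.card_mul_eq_card_mul r (fun a ha => ?_) (fun b hb => ?_)
  · rw [← hm a ha, ← Set.ncard_coe_finset, Finset.coe_bipartiteAbove]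
    rfl
  · rw [← hn b hb, ← Set.ncard_coe_finset, Finset.coe_bipartiteBelow]
    rfl

section ZModTwo

variable {V : Type*} [AddCommGroup V] [Module (ZMod 2) V]

theorem span_singleton_injOn_zmod_two : Set.InjOn (fun v : V => ZMod 2 ∙ v) {v | v ≠ 0} := by
  intro v _ w _ h
  obtain ⟨u, rfl⟩ := span_singleton_eq_span_singleton.1 h
  simp [Subsingleton.elim u 1]

variable [Finite V]

theorem ncard_factAtoms_zmod_two :
    (factAtoms (ZMod 2) V).ncard = {p : V × Dual (ZMod 2) V | p.2 p.1 = 1}.ncard := by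
  rw [factAtoms_eq_image]
  refine Set.InjOn.ncard_image ?_
  rintro ⟨v, f⟩ hf ⟨w, g⟩ hg he
  simp only [Prod.mk.injEq] at he
  have hv : v ≠ 0 := ne_zero_of_map (hf ▸ one_ne_zero : f v ≠ 0)
  have hw : w ≠ 0 := ne_zero_of_map (hg ▸ one_ne_zero : g w ≠ 0)
  obtain rfl : v = w := span_singleton_injOn_zmod_two hv hw he.1
  exact Prod.ext rfl (Dual.eq_of_ker_eq_of_apply_eq v he.2 (hf.trans hg.symm) (hf ▸ one_ne_zero))

theorem ncard_linesIn_zmod_two (T : Submodule (ZMod 2) V) :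
    (linesIn T).ncard = 2 ^ finrank (ZMod 2) T - 1 := by
  have himage : linesIn T = (fun v : V => ZMod 2 ∙ v) '' ((T : Set V) \ {0}) := by
    ext W
    constructor
    · rintro ⟨h1, hle⟩
      obtain ⟨v, hv, rfl⟩ := exists_eq_span_singleton_of_finrank_eq_one h1
      exact ⟨v, ⟨hle (mem_span_singleton_self v), hv⟩, rfl⟩
    · rintro ⟨v, ⟨hvT, hv⟩, rfl⟩
      exact ⟨finrank_span_singleton hv, (span_singleton_le_iff_mem _ _).2 hvT⟩
  rw [himage, (span_singleton_injOn_zmod_two.mono fun v hv => hv.2).ncard_image,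
    Set.ncard_sdiff_singleton_of_mem T.zero_mem, ← Nat.card_coe_set_eq]
  rw [SetLike.coe_sort_coe, natCard_eq_pow_finrank (K := ZMod 2) (V := T), Nat.card_zmod]

theorem ncard_lineFrames_through_zmod_two (hV : finrank (ZMod 2) V = 3)
    {ST : Submodule (ZMod 2) V × Submodule (ZMod 2) V} (hST : ST ∈ factAtoms (ZMod 2) V) :
    {B ∈ lineFrames (ZMod 2) V | ST.1 ∈ B ∧ sSup (B \ {ST.1}) = ST.2}.ncard = 3 := by
  have hT : finrank (ZMod 2) ST.2 = 2 := by
    have := finrank_snd_add_one_of_mem_factAtoms hST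
    omega
  have hdiff : ∀ P ⊆ linesIn ST.2, insert ST.1 P \ {ST.1} = P := fun P hP =>
    Set.insert_sdiff_self_of_notMem fun hS => not_le_of_mem_factAtoms hST (hP hS).2
  have hinj : Set.InjOn (insert ST.1) {P | P ⊆ linesIn ST.2 ∧ P.ncard = 2} :=
    fun P hP Q hQ h => by rw [← hdiff P hP.1, h, hdiff Q hQ.1]
  rw [lineFrames_through_eq_image_insert hV hST, hinj.ncard_image,
    Set.ncard_powerset_ncard (Set.toFinite _), ncard_linesIn_zmod_two, hT]
  rfl

theorem ncard_lineFrames_eq_ncard_factAtoms_zmod_two (hV : finrank (ZMod 2) V = 3) :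
    (lineFrames (ZMod 2) V).ncard = (factAtoms (ZMod 2) V).ncard := by
  have := Set.ncard_mul_eq_ncard_mul (Set.toFinite _) (Set.toFinite _)
    (fun ST B => ST.1 ∈ B ∧ sSup (B \ {ST.1}) = ST.2)
    (fun ST hST => ncard_lineFrames_through_zmod_two hV hST)
    (fun B hB => by
      simp only [eq_comm (a := sSup _)]
      exact (ncard_factAtoms_of_mem_lineFrames hB).trans hV)
  omega

end ZModTwo

theorem ncard_dotProduct_eq_one_fin_three_zmod_two :
    {p : (Fin 3 → ZMod 2) × (Fin 3 → ZMod 2) | p.2 ⬝ᵥ p.1 = 1}.ncard = 28 := by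
  rw [Set.ncard_eq_toFinset_card']
  decide

theorem stmt_12 :
    {ST : Submodule (ZMod 2) (Fin 3 → ZMod 2) × Submodule (ZMod 2) (Fin 3 → ZMod 2) |
        ST.1 ⊓ ST.2 = ⊥ ∧ ST.1 ⊔ ST.2 = ⊤ ∧ Module.finrank (ZMod 2) ST.1 = 1}.ncard = 28 ∧
    {B : Set (Submodule (ZMod 2) (Fin 3 → ZMod 2)) |
        B.ncard = 3 ∧ (∀ W ∈ B, Module.finrank (ZMod 2) W = 1) ∧ sSup B = ⊤}.ncard = 28 ∧
    (∀ B : Set (Submodule (ZMod 2) (Fin 3 → ZMod 2)),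
      B.ncard = 3 → (∀ W ∈ B, Module.finrank (ZMod 2) W = 1) → sSup B = ⊤ →
      {ST : Submodule (ZMod 2) (Fin 3 → ZMod 2) × Submodule (ZMod 2) (Fin 3 → ZMod 2) |
          ST.1 ⊓ ST.2 = ⊥ ∧ ST.1 ⊔ ST.2 = ⊤ ∧ Module.finrank (ZMod 2) ST.1 = 1 ∧
          ST.1 ∈ B ∧ ST.2 = sSup (B \ {ST.1})}.ncard = 3) ∧
    (∀ ST : Submodule (ZMod 2) (Fin 3 → ZMod 2) × Submodule (ZMod 2) (Fin 3 → ZMod 2),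
      ST.1 ⊓ ST.2 = ⊥ → ST.1 ⊔ ST.2 = ⊤ → Module.finrank (ZMod 2) ST.1 = 1 →
      {B : Set (Submodule (ZMod 2) (Fin 3 → ZMod 2)) |
          B.ncard = 3 ∧ (∀ W ∈ B, Module.finrank (ZMod 2) W = 1) ∧ sSup B = ⊤ ∧
          ST.1 ∈ B ∧ sSup (B \ {ST.1}) = ST.2}.ncard = 3) := by
  have hV : finrank (ZMod 2) (Fin 3 → ZMod 2) = 3 := finrank_fin_fun _
  have hatoms : (factAtoms (ZMod 2) (Fin 3 → ZMod 2)).ncard = 28 := by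
    rw [ncard_factAtoms_zmod_two, ncard_apply_eq_one_pi]
    exact ncard_dotProduct_eq_one_fin_three_zmod_two
  have hframes := ncard_lineFrames_eq_ncard_factAtoms_zmod_two hV
  simp only [lineFrames, factAtoms, hV] at hatoms hframes
  refine ⟨hatoms, hframes.trans hatoms, fun B h1 h2 h3 => ?_, fun ST h1 h2 h3 => ?_⟩
  · have := ncard_factAtoms_of_mem_lineFrames (B := B) ⟨h1.trans hV.symm, h2, h3⟩
    simpa only [factAtoms, Set.sep_ofPred, and_assoc, hV] using this
  · have := ncard_lineFrames_through_zmod_two hV (ST := ST) ⟨h1, h2, h3⟩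
    simpa only [lineFrames, Set.sep_ofPred, and_assoc, hV] using this
end

section
/- Let X be a set whose cardinality is finite, not prime, and not equal to 4 (or X infinite). Then the group homomorphism Γ from the symmetric group on X to the automorphism group of Fact X, given by (Γα)(θ₁, θ₂) = (αθ₁, αθ₂), is injective. -/
/-- The image `αθ = {(αx, αy) : (x,y) ∈ θ}` of an equivalence relation under a permutation. -/
def permSetoid {X : Type*} (α : Equiv.Perm X) (θ : Setoid X) : Setoid X :=
  Setoid.comap α.symm θ

open Function

section

variable {X R C : Type*}

lemma permSetoid_one (θ : Setoid X) : permSetoid 1 θ = θ := rfl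

lemma permSetoid_mul (α β : Equiv.Perm X) (θ : Setoid X) :
    permSetoid (α * β) θ = permSetoid α (permSetoid β θ) := rfl

lemma permSetoid_apply_rel_apply (α : Equiv.Perm X) (θ : Setoid X) {x y : X} :
    permSetoid α θ (α x) (α y) ↔ θ x y := by
  rw [permSetoid, Setoid.comap_rel, Equiv.symm_apply_apply, Equiv.symm_apply_apply]

lemma isFactorPair_ker_fst_ker_snd (e : X ≃ R × C) :
    IsFactorPair (Setoid.ker fun x => (e x).1) (Setoid.ker fun x => (e x).2) := by
  refine ⟨fun u v huv => e.injective ?_, ?_⟩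
  · simp only [Prod.mk.injEq, Quotient.eq, Setoid.ker_def] at huv
    exact Prod.ext huv.1 huv.2
  · rintro ⟨⟨u⟩, ⟨v⟩⟩
    refine ⟨e.symm ((e u).1, (e v).2), ?_⟩
    ext <;> exact Quotient.sound (by simp [Setoid.ker_def])

lemma exists_equiv_prod_fst_eq (e₀ : X ≃ R × C) {S : Finset X} {y : X} (hy : y ∉ S)
    {r₁ r₂ : R} (hr : r₁ ≠ r₂) (j : S ↪ C) (c : C) :
    ∃ e : X ≃ R × C, (∀ s ∈ S, (e s).1 = r₁) ∧ (e y).1 = r₂ := by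
  let f : Option S ↪ R × C :=
    ((Embedding.subtype _).optionElim y (by simpa using hy)).trans e₀.toEmbedding
  let g : Option S ↪ R × C :=
    (j.trans (Embedding.sectR r₁ C)).optionElim (r₂, c)
      (by rintro ⟨s, hs⟩; exact hr (congrArg Prod.fst hs))
  obtain ⟨σ, hσ⟩ := Equiv.Perm.exists_extending_pair f g f.injective g.injective
  refine ⟨e₀.trans σ, fun s hs => ?_, ?_⟩
  · simpa [f, g] using congrArg Prod.fst (hσ (some ⟨s, hs⟩))
  · simpa [f, g] using congrArg Prod.fst (hσ none)

theorem eq_one_of_forall_permSetoid_eq (γ : Equiv.Perm X)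
    (hγ : ∀ θ φ : Setoid X, IsFactorPair θ φ → permSetoid γ θ = θ)
    (e₀ : X ≃ R × C) [Nontrivial R] (ι : Fin 3 ↪ C) :
    γ = 1 := by
  classical
  by_contra hne
  obtain ⟨x, hx⟩ : ∃ x, γ x ≠ x := by
    contrapose! hne
    exact Equiv.ext hne
  obtain ⟨r₁, r₂, hr⟩ := exists_pair_ne R
  have h3 : 3 ≤ ENat.card X := by
    simpa using ENat.card_le_card_of_injective
      ((ι.trans (Embedding.sectR r₁ C)).trans e₀.symm.toEmbedding).injective
  obtain ⟨z, hzx, hzy⟩ := ENat.exists_ne_ne_of_three_le h3 x (γ x)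
  let S : Finset X := {x, z, γ z}
  have hyS : γ x ∉ S := by
    simp only [S, Finset.mem_insert, Finset.mem_singleton, not_or]
    exact ⟨hx, hzy.symm, γ.injective.ne hzx.symm⟩
  let j : S ↪ C := (S.equivFin.toEmbedding.trans (Fin.castLEEmb Finset.card_le_three)).trans ι
  obtain ⟨e, hS, hyr⟩ := exists_equiv_prod_fst_eq e₀ hyS hr j (ι 0)
  let θ := Setoid.ker fun u => (e u).1
  have hxz : θ x z := (hS x (by simp [S])).trans (hS z (by simp [S])).symm
  have hyw : θ (γ x) (γ z) := by
    rw [← hγ θ _ (isFactorPair_ker_fst_ker_snd e)]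
    exact (permSetoid_apply_rel_apply γ θ).2 hxz
  have hyw' : (e (γ x)).1 = (e (γ z)).1 := hyw
  rw [hyr, hS (γ z) (by simp [S])] at hyw'
  exact hr hyw'.symm

end

lemma exists_two_le_three_le_mul_eq {n : ℕ} (h2 : 2 ≤ n) (hn : ¬ n.Prime) (h4 : n ≠ 4) :
    ∃ a b : ℕ, 2 ≤ a ∧ 3 ≤ b ∧ n = a * b := by
  have hp : n.minFac.Prime := Nat.minFac_prime (by omega)
  obtain ⟨m, hm⟩ := Nat.minFac_dvd n
  refine ⟨n.minFac, m, hp.two_le, ?_, hm⟩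
  by_contra! hm3
  interval_cases m
  · omega
  · exact hn (by rwa [hm, mul_one])
  · have : n.minFac ≤ 2 := Nat.minFac_le_of_dvd le_rfl ⟨n.minFac, hm.trans (mul_comm _ _)⟩
    have := hp.two_le
    omega

/-- If `|X|` is neither prime nor 4 (in particular if `X` is infinite), the action
`Γ` of permutations of `X` on factor pairs is injective. -/
theorem stmt_13 {X : Type*} (hX : Finite X → ¬ (Nat.card X).Prime ∧ Nat.card X ≠ 4)
    (α β : Equiv.Perm X)
    (h : ∀ θ φ : Setoid X, IsFactorPair θ φ →
        (permSetoid α θ, permSetoid α φ) = (permSetoid β θ, permSetoid β φ)) :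
    α = β := by
  have hfix : ∀ θ φ : Setoid X, IsFactorPair θ φ → permSetoid (α⁻¹ * β) θ = θ :=
    fun θ φ hθφ => by
      rw [permSetoid_mul, ← (Prod.mk.inj (h θ φ hθφ)).1, ← permSetoid_mul, inv_mul_cancel,
        permSetoid_one]
  rw [← inv_mul_eq_one]
  cases finite_or_infinite X with
  | inl hfin =>
    obtain hle | h2 := le_or_gt (Nat.card X) 1
    · have := Finite.card_le_one_iff_subsingleton.1 hle
      exact Subsingleton.elim _ _
    obtain ⟨a, b, ha, hb, hab⟩ := exists_two_le_three_le_mul_eq h2 (hX hfin).1 (hX hfin).2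
    have : Nontrivial (Fin a) := Fin.nontrivial_iff_two_le.2 ha
    exact eq_one_of_forall_permSetoid_eq _ hfix
      ((Finite.equivFinOfCardEq hab).trans finProdFinEquiv.symm) (Fin.castLEEmb hb)
  | inr hinf =>
    obtain ⟨e⟩ : Nonempty (X ≃ X × X) :=
      Cardinal.eq.1 (by simp [Cardinal.mul_eq_self (Cardinal.aleph0_le_mk X)])
    exact eq_one_of_forall_permSetoid_eq _ hfix e
      (Fin.valEmbedding.trans (Infinite.natEmbedding X))
end

section
/- Let X be a 4-element set. Then Fact X is isomorphic as an orthomodular poset to MO₃ (the horizontal sum of three 4-element Boolean algebras), and the kernel of the homomorphism Γ : Sym(X) → Aut(Fact X) is the Klein four group consisting of the identity and the three double transpositions. -/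
/-- The elements of `Fact X`: factor pairs of `X`. -/
def FactorPair (X : Type*) : Type _ := {p : Setoid X × Setoid X // IsFactorPair p.1 p.2}

/-- Two equivalence relations permute if their relational compositions agree. -/
def Permutes {X : Type*} (θ ψ : Setoid X) : Prop :=
  ∀ x z : X, (∃ y, θ.r x y ∧ ψ.r y z) ↔ (∃ y, ψ.r x y ∧ θ.r y z)

/-- The partial order of `Fact X`: `(θ₁,θ₂) ≤ (ψ₁,ψ₂)` iff `θ₁ ⊆ ψ₁`, `ψ₂ ⊆ θ₂`,
and `θ₁` permutes with `ψ₂`. -/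
def FactorPair.le {X : Type*} (p q : FactorPair X) : Prop :=
  p.1.1 ≤ q.1.1 ∧ q.1.2 ≤ p.1.2 ∧ Permutes p.1.1 q.1.2

/-- The orthocomplementation of `Fact X`: `(θ₁,θ₂)' = (θ₂,θ₁)`. -/
def FactorPair.perp {X : Type*} (p : FactorPair X) : FactorPair X :=
  ⟨(p.1.2, p.1.1), by
    have h := p.2
    exact ((Equiv.prodComm _ _).bijective).comp h⟩

/-- The orthomodular poset `MO n`: bottom, top, and `2n` middle elements forming `n`
orthocomplementary pairs. -/
inductive MO (n : ℕ) : Type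
  | bot : MO n
  | top : MO n
  | atom : Fin n → MO n
  | coatom : Fin n → MO n

/-- The order of `MO n`. -/
def MO.le {n : ℕ} : MO n → MO n → Prop
  | .bot, _ => True
  | _, .top => True
  | .atom i, .atom j => i = j
  | .coatom i, .coatom j => i = j
  | _, _ => False

/-- The orthocomplementation of `MO n`. -/
def MO.perp {n : ℕ} : MO n → MO n
  | .bot => .top
  | .top => .bot
  | .atom i => .coatom i
  | .coatom i => .atom i

/-!
For a factor pair `(θ, φ)` the map `x ↦ (x/θ, x/φ)` is a bijection, so `|X| = |X/θ| · |X/φ|` and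
every `θ`-class meets every `φ`-class exactly once. When `|X| = 4` this leaves `(⊥, ⊤)`,
`(⊤, ⊥)` and the pairs `(π, π')` of distinct partitions of `X` into two 2-element blocks. There are
three such partitions, pairwise incomparable, and any two of them form a factor pair; so the six
middle elements are pairwise incomparable and `(π, π')' = (π', π)`, which is `MO₃`. Every
permutation fixes `⊥` and `⊤`, so it fixes all factor pairs iff it preserves each of the three
partitions; identifying `X` with `Fin 4`, this is a finite check whose solutions are the identity
and the three double transpositions.
-/

open Function Equiv

section FactorPairs

variable {X : Type*} {θ φ : Setoid X}

theorem isFactorPair_iff :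
    IsFactorPair θ φ ↔ (∀ x y, θ x y → φ x y → x = y) ∧ ∀ a b, ∃ x, θ a x ∧ φ x b := by
  constructor
  · rintro ⟨hinj, hsurj⟩
    refine ⟨fun x y hθ hφ => hinj (Prod.ext (Quotient.sound hθ) (Quotient.sound hφ)),
      fun a b => ?_⟩
    obtain ⟨x, hx⟩ := hsurj (Quotient.mk θ a, Quotient.mk φ b)
    exact ⟨x, θ.symm (Quotient.exact (congrArg Prod.fst hx)),
      Quotient.exact (congrArg Prod.snd hx)⟩
  · rintro ⟨hinj, hsurj⟩
    refine ⟨fun x y h => hinj x y (Quotient.exact (congrArg Prod.fst h))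
      (Quotient.exact (congrArg Prod.snd h)), ?_⟩
    rintro ⟨qa, qb⟩
    induction qa using Quotient.ind with | _ a => ?_
    induction qb using Quotient.ind with | _ b => ?_
    obtain ⟨x, hθ, hφ⟩ := hsurj a b
    exact ⟨x, Prod.ext (Quotient.sound (θ.symm hθ)) (Quotient.sound hφ)⟩

theorem IsFactorPair.symm (h : IsFactorPair θ φ) : IsFactorPair φ θ :=
  (Equiv.prodComm _ _).bijective.comp h

theorem isFactorPair_bot_top : IsFactorPair (⊥ : Setoid X) ⊤ :=
  isFactorPair_iff.2 ⟨fun _ _ h _ => h, fun a _ => ⟨a, rfl, trivial⟩⟩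

theorem eq_bot_of_isFactorPair_self (h : IsFactorPair θ θ) : θ = ⊥ :=
  Setoid.ext fun x y => ⟨fun hxy => (isFactorPair_iff.1 h).1 x y hxy hxy, fun hxy => hxy ▸ θ.refl x⟩

theorem IsFactorPair.permutes (h : IsFactorPair θ φ) : Permutes θ φ := by
  obtain ⟨-, hsurj⟩ := isFactorPair_iff.1 h
  intro x z
  obtain ⟨y, hzy, hyx⟩ := hsurj z x
  exact iff_of_true (hsurj x z) ⟨y, φ.symm hyx, θ.symm hzy⟩

theorem permutes_bot_left (ψ : Setoid X) : Permutes ⊥ ψ := by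
  intro x z
  simp

theorem permutes_bot_right (ψ : Setoid X) : Permutes ψ ⊥ := by
  intro x z
  simp

theorem IsFactorPair.card_eq_mul (h : IsFactorPair θ φ) :
    Nat.card X = Nat.card (Quotient θ) * Nat.card (Quotient φ) := by
  rw [← Nat.card_prod]
  exact Nat.card_congr (Equiv.ofBijective _ h)

/-- Every `θ`-class is a transversal of `φ`. -/
theorem IsFactorPair.card_class (h : IsFactorPair θ φ) (a : X) :
    Nat.card {x // θ a x} = Nat.card (Quotient φ) := by
  obtain ⟨hinj, hsurj⟩ := isFactorPair_iff.1 h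
  refine Nat.card_congr (Equiv.ofBijective (fun x => Quotient.mk φ x.1) ⟨?_, ?_⟩)
  · rintro ⟨x, hx⟩ ⟨y, hy⟩ hxy
    exact Subtype.ext (hinj x y (θ.trans (θ.symm hx) hy) (Quotient.exact hxy))
  · intro q
    induction q using Quotient.ind with | _ b => ?_
    obtain ⟨x, hax, hxb⟩ := hsurj a b
    exact ⟨⟨x, hax⟩, Quotient.sound hxb⟩

theorem IsFactorPair.eq_bot_of_card_quotient_eq_one (h : IsFactorPair θ φ)
    (hφ : Nat.card (Quotient φ) = 1) : θ = ⊥ := by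
  refine Setoid.ext fun x y => ⟨fun hxy => ?_, fun hxy => hxy ▸ θ.refl x⟩
  have : Subsingleton {z // θ x z} := (Nat.card_eq_one_iff_unique.1 (h.card_class x ▸ hφ)).1
  exact congrArg Subtype.val (Subsingleton.elim (⟨x, θ.refl x⟩ : {z // θ x z}) ⟨y, hxy⟩)

theorem eq_top_of_card_quotient_eq_one (hθ : Nat.card (Quotient θ) = 1) : θ = ⊤ := by
  have : Subsingleton (Quotient θ) := (Nat.card_eq_one_iff_unique.1 hθ).1
  exact Setoid.ext fun x y => iff_of_true (Quotient.exact (Subsingleton.elim _ _)) trivial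

theorem rel_iff_of_card_quotient_eq_two (hθ : Nat.card (Quotient θ) = 2) (a x y : X) :
    θ x y ↔ (θ a x ↔ θ a y) := by
  refine ⟨fun hxy => ⟨(θ.trans · hxy), (θ.trans · (θ.symm hxy))⟩, fun hiff => ?_⟩
  by_cases hax : θ a x
  · exact θ.trans (θ.symm hax) (hiff.1 hax)
  obtain ⟨c, -, hc⟩ := (Nat.card_eq_two_iff' (Quotient.mk θ a)).1 hθ
  have hx := hc _ fun e => hax (θ.symm (Quotient.exact e))
  have hy := hc _ fun e => mt hiff.2 hax (θ.symm (Quotient.exact e))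
  exact Quotient.exact (hx.trans hy.symm)

theorem exists_class_eq_pair_of_card_class_eq_two {a : X} (h : Nat.card {x // θ a x} = 2) :
    ∃ b, b ≠ a ∧ ∀ x, θ a x ↔ x = a ∨ x = b := by
  obtain ⟨⟨b, hab⟩, hb, huniq⟩ := (Nat.card_eq_two_iff' (⟨a, θ.refl a⟩ : {x // θ a x})).1 h
  refine ⟨b, fun e => hb (Subtype.ext e), fun x => ⟨fun hax => ?_, ?_⟩⟩
  · by_cases hx : x = a
    · exact .inl hx
    · exact .inr (congrArg Subtype.val (huniq ⟨x, hax⟩ fun e => hx (congrArg Subtype.val e)))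
  · rintro (rfl | rfl)
    exacts [θ.refl x, hab]

end FactorPairs

namespace FactorPair

variable {X : Type*}

def bot : FactorPair X := ⟨(⊥, ⊤), isFactorPair_bot_top⟩

def top : FactorPair X := ⟨(⊤, ⊥), isFactorPair_bot_top.symm⟩

theorem le_refl (p : FactorPair X) : p.le p :=
  ⟨le_rfl, le_rfl, p.2.permutes⟩

theorem bot_le (p : FactorPair X) : bot.le p :=
  ⟨_root_.bot_le, le_top, permutes_bot_left _⟩

theorem le_top (p : FactorPair X) : p.le top :=
  ⟨_root_.le_top, _root_.bot_le, permutes_bot_right _⟩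

end FactorPair

namespace MO

variable {n : ℕ}

theorem le_iff {a b : MO n} : a.le b ↔ a = bot ∨ b = top ∨ a = b := by
  cases a <;> cases b <;> simp [MO.le]

theorem le_antisymm {a b : MO n} (hab : a.le b) (hba : b.le a) : a = b := by
  cases a <;> cases b <;> simp_all [MO.le]

end MO

/-- The indicator of the block `{0, i + 1}`; its kernels are the three partitions of `Fin 4` into
two pairs. -/
def pairBlock (i : Fin 3) (k : Fin 4) : Bool := k = 0 || k = i.succ

theorem pairBlock_injective {i j : Fin 3} (hij : i ≠ j) {k l : Fin 4}
    (hi : pairBlock i k = pairBlock i l) (hj : pairBlock j k = pairBlock j l) : k = l := by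
  revert i j k l; decide

theorem exists_pairBlock_eq_pairBlock {i j : Fin 3} (hij : i ≠ j) (k l : Fin 4) :
    ∃ m, pairBlock i k = pairBlock i m ∧ pairBlock j m = pairBlock j l := by
  revert i j k l; decide

theorem eq_of_pairBlock_imp {i j : Fin 3}
    (h : ∀ k l, pairBlock i k = pairBlock i l → pairBlock j k = pairBlock j l) : i = j := by
  revert i j; decide

theorem exists_pairBlock_ne_pairBlock_zero (i : Fin 3) : ∃ k, pairBlock i k ≠ pairBlock i 0 := by
  revert i; decide

theorem preserves_pairBlock_iff (β : Perm (Fin 4)) :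
    (∀ i k l, pairBlock i k = pairBlock i l ↔ pairBlock i (β k) = pairBlock i (β l)) ↔
      β * β = 1 ∧ (β = 1 ∨ ∀ k, β k ≠ k) := by
  revert β; decide

section PairPartition

variable {X : Type*} (e : X ≃ Fin 4)

def pairPartition (i : Fin 3) : Setoid X := Setoid.ker (pairBlock i ∘ e)

theorem pairPartition_rel {i : Fin 3} {x y : X} :
    pairPartition e i x y ↔ pairBlock i (e x) = pairBlock i (e y) := Iff.rfl

theorem isFactorPair_pairPartition {i j : Fin 3} (hij : i ≠ j) :
    IsFactorPair (pairPartition e i) (pairPartition e j) := by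
  refine isFactorPair_iff.2 ⟨fun x y hi hj => e.injective (pairBlock_injective hij hi hj),
    fun a b => ?_⟩
  obtain ⟨m, hi, hj⟩ := exists_pairBlock_eq_pairBlock hij (e a) (e b)
  exact ⟨e.symm m, by simpa [pairPartition_rel] using hi, by simpa [pairPartition_rel] using hj⟩

theorem pairPartition_le_iff {i j : Fin 3} : pairPartition e i ≤ pairPartition e j ↔ i = j := by
  refine ⟨fun h => eq_of_pairBlock_imp fun k l hkl => ?_, fun h => h ▸ le_rfl⟩
  simpa [pairPartition_rel] using Setoid.le_def.1 h (x := e.symm k) (y := e.symm l)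
    (by simpa [pairPartition_rel] using hkl)

theorem pairPartition_ne_bot (i : Fin 3) : pairPartition e i ≠ ⊥ := by
  intro h
  have : pairPartition e i (e.symm 0) (e.symm i.succ) := by simp [pairPartition_rel, pairBlock]
  rw [h, Setoid.bot_def, e.symm_apply_eq, apply_symm_apply] at this
  exact Fin.succ_ne_zero i this.symm

theorem pairPartition_ne_top (i : Fin 3) : pairPartition e i ≠ ⊤ := by
  intro h
  obtain ⟨k, hk⟩ := exists_pairBlock_ne_pairBlock_zero i
  have : pairPartition e i (e.symm k) (e.symm 0) := h ▸ trivial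
  exact hk (by simpa [pairPartition_rel] using this)

theorem eq_pairPartition_of_card_eq_two {θ : Setoid X} (hθ : Nat.card (Quotient θ) = 2)
    (hclass : Nat.card {x // θ (e.symm 0) x} = 2) : ∃ i, θ = pairPartition e i := by
  obtain ⟨b, hb, hclass⟩ := exists_class_eq_pair_of_card_class_eq_two hclass
  obtain ⟨i, hi⟩ := Fin.exists_succ_eq.2 fun h : e b = 0 => hb (e.eq_symm_apply.2 h)
  obtain rfl : b = e.symm i.succ := e.eq_symm_apply.2 hi.symm
  refine ⟨i, Setoid.ext fun x y => ?_⟩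
  rw [rel_iff_of_card_quotient_eq_two hθ (e.symm 0), pairPartition_rel, hclass, hclass]
  simp [pairBlock, Equiv.eq_symm_apply, ← Bool.decide_or, decide_eq_decide]

theorem IsFactorPair.eq_or_eq_pairPartition {θ φ : Setoid X} (h : IsFactorPair θ φ) :
    (θ = ⊥ ∧ φ = ⊤) ∨ (θ = ⊤ ∧ φ = ⊥) ∨
      ∃ i j, i ≠ j ∧ θ = pairPartition e i ∧ φ = pairPartition e j := by
  have hcard : Nat.card (Quotient θ) * Nat.card (Quotient φ) = 4 := by
    rw [← h.card_eq_mul, Nat.card_congr e, Nat.card_fin]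
  obtain hθ | hφ | ⟨hθ, hφ⟩ : Nat.card (Quotient θ) = 1 ∨ Nat.card (Quotient φ) = 1 ∨
      Nat.card (Quotient θ) = 2 ∧ Nat.card (Quotient φ) = 2 := by
    have : Nat.card (Quotient θ) ≤ 4 := Nat.le_of_dvd (by norm_num) ⟨_, hcard.symm⟩
    interval_cases Nat.card (Quotient θ) <;> omega
  · exact .inr <| .inl ⟨eq_top_of_card_quotient_eq_one hθ, h.symm.eq_bot_of_card_quotient_eq_one hθ⟩
  · exact .inl ⟨h.eq_bot_of_card_quotient_eq_one hφ, eq_top_of_card_quotient_eq_one hφ⟩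
  obtain ⟨i, rfl⟩ := eq_pairPartition_of_card_eq_two e hθ (h.card_class _ ▸ hφ)
  obtain ⟨j, rfl⟩ := eq_pairPartition_of_card_eq_two e hφ (h.symm.card_class _ ▸ hθ)
  refine .inr <| .inr ⟨i, j, ?_, rfl, rfl⟩
  rintro rfl
  exact pairPartition_ne_bot e i (eq_bot_of_isFactorPair_self h)

end PairPartition

section OfMO

variable {X : Type*} (e : X ≃ Fin 4)

def FactorPair.ofMO : MO 3 → FactorPair X
  | .bot => .bot
  | .top => .top
  | .atom i => ⟨(pairPartition e i, pairPartition e (i + 1)),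
      isFactorPair_pairPartition e (by simp)⟩
  | .coatom i => ⟨(pairPartition e (i + 1), pairPartition e i),
      isFactorPair_pairPartition e (by simp)⟩

theorem FactorPair.ofMO_perp (a : MO 3) : ofMO e a.perp = (ofMO e a).perp := by
  cases a <;> rfl

theorem FactorPair.ofMO_le_ofMO_iff {a b : MO 3} : (ofMO e a).le (ofMO e b) ↔ a.le b := by
  refine ⟨fun ⟨hfst, hsnd, _⟩ => ?_, fun h => ?_⟩
  · have htb : ¬ (⊤ : Setoid X) ≤ ⊥ := fun hle =>
      pairPartition_ne_bot e 0 (le_bot_iff.1 (_root_.le_top.trans hle))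
    cases a <;> cases b <;>
      simp [ofMO, FactorPair.bot, FactorPair.top, MO.le, top_le_iff, le_bot_iff,
        pairPartition_le_iff, pairPartition_ne_bot, pairPartition_ne_top, htb] at hfst hsnd ⊢ <;>
      omega
  · obtain rfl | rfl | rfl := MO.le_iff.1 h
    exacts [bot_le _, le_top _, le_refl _]

theorem FactorPair.ofMO_injective : Injective (ofMO e) := fun _ _ hab =>
  MO.le_antisymm ((ofMO_le_ofMO_iff e).1 (hab ▸ le_refl _))
    ((ofMO_le_ofMO_iff e).1 (hab ▸ le_refl _))

theorem FactorPair.ofMO_surjective : Surjective (ofMO e) := by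
  rintro ⟨⟨θ, φ⟩, h⟩
  obtain ⟨rfl, rfl⟩ | ⟨rfl, rfl⟩ | ⟨i, j, hij, rfl, rfl⟩ := h.eq_or_eq_pairPartition e
  · exact ⟨.bot, rfl⟩
  · exact ⟨.top, rfl⟩
  obtain rfl | rfl : j = i + 1 ∨ i = j + 1 :=
    (by decide : ∀ i j : Fin 3, i ≠ j → j = i + 1 ∨ i = j + 1) i j hij
  exacts [⟨.atom i, rfl⟩, ⟨.coatom j, rfl⟩]

end OfMO

section Kernel

variable {X : Type*} (e : X ≃ Fin 4)

theorem comap_symm_pairPartition_eq_iff (α : Perm X) (i : Fin 3) :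
    (pairPartition e i).comap α.symm = pairPartition e i ↔ ∀ k l,
      pairBlock i k = pairBlock i l ↔
        pairBlock i (e.permCongr α k) = pairBlock i (e.permCongr α l) := by
  simp [Setoid.ext_iff, Setoid.comap_rel, pairPartition_rel,
    (e.symm.trans α).symm.forall_congr_left]

theorem forall_comap_symm_pairPartition_eq_iff (α : Perm X) :
    (∀ i, (pairPartition e i).comap α.symm = pairPartition e i) ↔
      α * α = 1 ∧ (α = 1 ∨ ∀ x, α x ≠ x) := by
  have hone : ∀ β : Perm X, e.permCongr β = 1 ↔ β = 1 := fun β =>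
    map_eq_one_iff e.permCongrHom e.permCongrHom.injective (x := β)
  simp only [comap_symm_pairPartition_eq_iff]
  rw [preserves_pairBlock_iff, ← e.permCongr_mul, hone, hone,
    e.forall_congr_left (p := fun x => α x ≠ x)]
  simp [← Equiv.eq_symm_apply]

theorem forall_isFactorPair_comap_symm_eq_iff (α : Perm X) :
    (∀ θ φ : Setoid X, IsFactorPair θ φ → (θ.comap α.symm, φ.comap α.symm) = (θ, φ)) ↔
      ∀ i, (pairPartition e i).comap α.symm = pairPartition e i := by
  refine ⟨fun h i => ?_, fun h θ φ hθφ => ?_⟩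
  · exact congrArg Prod.fst (h _ _ (isFactorPair_pairPartition e (j := i + 1) (by simp)))
  · obtain ⟨rfl, rfl⟩ | ⟨rfl, rfl⟩ | ⟨i, j, -, rfl, rfl⟩ := hθφ.eq_or_eq_pairPartition e <;>
      simp [Setoid.ext_iff, Setoid.comap_rel, h]

end Kernel

theorem stmt_14 {X : Type*} [Fintype X] (hX : Fintype.card X = 4) :
    (∃ e : FactorPair X ≃ MO 3,
      (∀ p q : FactorPair X, FactorPair.le p q ↔ MO.le (e p) (e q)) ∧
      (∀ p : FactorPair X, e (FactorPair.perp p) = MO.perp (e p))) ∧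
    (∀ α : Equiv.Perm X,
      (∀ θ φ : Setoid X, IsFactorPair θ φ →
        (Setoid.comap α.symm θ, Setoid.comap α.symm φ) = (θ, φ)) ↔
      (α * α = 1 ∧ (α = 1 ∨ ∀ x : X, α x ≠ x))) := by
  let e : X ≃ Fin 4 := Fintype.equivFinOfCardEq hX
  let E : MO 3 ≃ FactorPair X :=
    .ofBijective (FactorPair.ofMO e) ⟨FactorPair.ofMO_injective e, FactorPair.ofMO_surjective e⟩
  have hE : ∀ p, FactorPair.ofMO e (E.symm p) = p := E.apply_symm_apply
  refine ⟨⟨E.symm, fun p q => ?_, fun p => E.injective ?_⟩, fun α => ?_⟩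
  · rw [← FactorPair.ofMO_le_ofMO_iff e, hE, hE]
  · change FactorPair.ofMO e _ = FactorPair.ofMO e _
    rw [FactorPair.ofMO_perp, hE, hE]
  · rw [forall_isFactorPair_comap_symm_eq_iff e, forall_comap_symm_pairPartition_eq_iff]
end

section
/- Let X be a 27-element set and let a, b be equivalence relations on X, each with 9 blocks of 3 elements, such that the transitive closure of a ∪ b is an equivalence relation with 7 blocks of 3 elements and 1 block of 6 elements. Then the number of equivalence relations on X with 3 blocks of 9 elements each that contain both a and b is exactly 70. -/
/-!
Only `c = a ⊔ b` matters, since `a ≤ A ∧ b ≤ A ↔ c ≤ A`, and every class of such an `A` is a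
union of `c`-classes: one class `u` of size 6 and seven classes of size 3. For the classes of `A`
to have size 9, the class containing `u` must consist of `u` and one 3-class `t` (7 choices), and
the other two split the remaining six 3-classes into two triples. Such a split is determined by
the two partners of a fixed one of the six, in `C(5, 2) = 10` ways. Hence `7 * 10 = 70`.
-/

open Set

namespace Set

variable {α ι : Type*}

theorem ncard_biUnion_eq_mul {t : Set ι} (ht : t.Finite) {s : ι → Set α} {k : ℕ}
    (hs : ∀ i ∈ t, (s i).Finite) (hdisj : t.PairwiseDisjoint s) (hk : ∀ i ∈ t, (s i).ncard = k) :
    (⋃ i ∈ t, s i).ncard = t.ncard * k := by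
  rw [ht.ncard_biUnion hs hdisj, finsum_mem_congr rfl hk, ← finsum_one, finsum_mem_mul]
  simp

theorem ncard_setOf_subset_ncard_eq {E : Set α} (hE : E.Finite) (k : ℕ) :
    {s : Set α | s ⊆ E ∧ s.ncard = k}.ncard = E.ncard.choose k := by
  obtain ⟨F, rfl⟩ := hE.exists_finset_coe
  have : {s : Set α | s ⊆ ↑F ∧ s.ncard = k} = (↑) '' (↑(F.powersetCard k) : Set (Finset α)) := by
    ext s
    constructor
    · rintro ⟨hsF, rfl⟩
      obtain ⟨G, rfl⟩ := (F.finite_toSet.subset hsF).exists_finset_coe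
      exact ⟨G, Finset.mem_powersetCard.2 ⟨by exact_mod_cast hsF, (ncard_coe_finset G).symm⟩, rfl⟩
    · rintro ⟨G, hG, rfl⟩
      rw [Finset.mem_coe, Finset.mem_powersetCard] at hG
      exact ⟨by exact_mod_cast hG.1, by rw [ncard_coe_finset, hG.2]⟩
  rw [this, ncard_image_of_injective _ Finset.coe_injective, ncard_coe_finset,
    Finset.card_powersetCard, ncard_coe_finset]

theorem ncard_setOf_subset_mem_ncard_eq {E : Set α} (hE : E.Finite) {a : α} (ha : a ∈ E)
    (k : ℕ) : {s : Set α | s ⊆ E ∧ s.ncard = k + 1 ∧ a ∈ s}.ncard = (E.ncard - 1).choose k := by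
  have : {s : Set α | s ⊆ E ∧ s.ncard = k + 1 ∧ a ∈ s} =
      insert a '' {s | s ⊆ E \ {a} ∧ s.ncard = k} := by
    ext s
    constructor
    · rintro ⟨hsE, hs, has⟩
      refine ⟨s \ {a}, ⟨sdiff_subset_sdiff_left hsE, ?_⟩, insert_sdiff_self_of_mem has⟩
      rw [ncard_sdiff_singleton_of_mem has, hs, Nat.add_sub_cancel]
    · rintro ⟨s, ⟨hsE, rfl⟩, rfl⟩
      have has : a ∉ s := fun h => (hsE h).2 rfl
      exact ⟨insert_subset ha (hsE.trans sdiff_subset),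
        ncard_insert_of_notMem has (hE.subset (hsE.trans sdiff_subset)), mem_insert a s⟩
  rw [this, InjOn.ncard_image, ncard_setOf_subset_ncard_eq hE.sdiff k,
    ncard_sdiff_singleton_of_mem ha]
  rintro s ⟨hs, -⟩ s' ⟨hs', -⟩ h
  rw [← insert_sdiff_self_of_notMem (fun h => (hs h).2 rfl),
    ← insert_sdiff_self_of_notMem (fun h => (hs' h).2 rfl), h]

theorem exists_eq_insert_sep_of_ncard {C : Set α} {f : α → ℕ} {m n k : ℕ}
    (hmn : m ≠ n) (hm : {x ∈ C | f x = m}.ncard = k) (hn : {x ∈ C | f x = n}.ncard = 1)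
    (hC : C.ncard = k + 1) : ∃ u, f u = n ∧ C = insert u {x ∈ C | f x = m} := by
  obtain ⟨u, hu⟩ := ncard_eq_one.1 hn
  have huC : u ∈ {x ∈ C | f x = n} := hu ▸ rfl
  have hCfin : C.Finite := finite_of_ncard_ne_zero (by omega)
  refine ⟨u, huC.2, (eq_of_subset_of_ncard_le (insert_subset huC.1 (sep_subset _ _)) ?_ hCfin).symm⟩
  rw [ncard_insert_of_notMem (fun h => hmn (h.2.symm.trans huC.2)) (hCfin.subset (sep_subset _ _)),
    hm, hC]

end Set

namespace Setoid

variable {X : Type*} {r s : Setoid X}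

theorem le_of_forall_mem_classes_subset (h : ∀ d ∈ r.classes, ∃ e ∈ s.classes, d ⊆ e) :
    r ≤ s := by
  intro x y hxy
  obtain ⟨e, he, hde⟩ := h _ (r.mem_classes y)
  exact s.rel_iff_exists_classes.2 ⟨e, he, hde hxy, hde (r.refl' y)⟩

theorem subset_of_le_of_mem_classes (hrs : r ≤ s) {d e : Set X} (hd : d ∈ r.classes)
    (he : e ∈ s.classes) {x : X} (hxd : x ∈ d) (hxe : x ∈ e) : d ⊆ e := by
  obtain ⟨y, rfl⟩ := hd
  obtain ⟨z, rfl⟩ := he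
  exact fun w hw => s.trans' (hrs (r.trans' hw (r.symm' hxd))) hxe

theorem sUnion_setOf_mem_classes_subset (hrs : r ≤ s) {e : Set X} (he : e ∈ s.classes) :
    ⋃₀ {d ∈ r.classes | d ⊆ e} = e := by
  refine subset_antisymm (sUnion_subset fun d hd => hd.2) fun x hx => ?_
  exact ⟨_, ⟨r.mem_classes x,
    subset_of_le_of_mem_classes hrs (r.mem_classes x) he (r.refl' x) hx⟩, r.refl' x⟩

theorem setOf_mem_subset_sUnion {D I : Set (Set X)} (hD : D ⊆ r.classes) (hI : I ⊆ D) :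
    {d ∈ D | d ⊆ ⋃₀ I} = I := by
  refine subset_antisymm (fun d ⟨hdD, hdI⟩ => ?_) fun d hd => ⟨hI hd, subset_sUnion_of_mem hd⟩
  obtain ⟨x, hx⟩ := nonempty_of_mem_partition r.isPartition_classes (hD hdD)
  obtain ⟨d', hd', hxd'⟩ := hdI hx
  rwa [eq_of_mem_classes (hD hdD) hx (hD (hI hd')) hxd']

theorem eq_of_le_of_forall_ncard_classes_eq (hrs : r ≤ s) {n : ℕ} (hn : n ≠ 0)
    (hr : ∀ d ∈ r.classes, d.ncard = n) (hs : ∀ e ∈ s.classes, e.ncard = n) : r = s := by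
  refine le_antisymm hrs fun x y hxy => ?_
  have hy : {z | r z y} = {z | s z y} := by
    refine eq_of_subset_of_ncard_le (fun z hz => hrs hz) ?_ ?_
    · rw [hr _ (r.mem_classes y), hs _ (s.mem_classes y)]
    · exact finite_of_ncard_ne_zero (by rwa [hs _ (s.mem_classes y)])
  exact (hy ▸ hxy : x ∈ {z | r z y})

theorem disjoint_sUnion_of_subset_classes {I J : Set (Set X)} (hI : I ⊆ r.classes)
    (hJ : J ⊆ r.classes) (hIJ : Disjoint I J) : Disjoint (⋃₀ I) (⋃₀ J) := by
  refine disjoint_sUnion_left.2 fun d hd => disjoint_sUnion_right.2 fun d' hd' => ?_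
  exact r.isPartition_classes.pairwiseDisjoint (hI hd) (hJ hd') (hIJ.ne_of_mem hd hd')

theorem exists_le_classes_eq_image_sUnion {𝓘 : Set (Set (Set X))}
    (hsub : ∀ I ∈ 𝓘, I ⊆ r.classes) (hne : ∀ I ∈ 𝓘, I.Nonempty)
    (hdisj : 𝓘.PairwiseDisjoint id) (hcover : ∀ d ∈ r.classes, ∃ I ∈ 𝓘, d ∈ I) :
    ∃ s : Setoid X, r ≤ s ∧ s.classes = sUnion '' 𝓘 ∧ s.classes.ncard = 𝓘.ncard := by
  have hdisj' : ∀ I ∈ 𝓘, ∀ J ∈ 𝓘, I ≠ J → Disjoint (⋃₀ I) (⋃₀ J) := fun I hI J hJ hIJ =>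
    disjoint_sUnion_of_subset_classes (hsub I hI) (hsub J hJ) (hdisj hI hJ hIJ)
  have hne' : ∀ I ∈ 𝓘, (⋃₀ I).Nonempty := fun I hI => by
    obtain ⟨d, hd⟩ := hne I hI
    exact (nonempty_of_mem_partition r.isPartition_classes (hsub I hI hd)).mono
      (subset_sUnion_of_mem hd)
  have hinj : InjOn sUnion 𝓘 := fun I hI J hJ hIJ => by
    by_contra hne
    exact (hne' I hI).ne_empty (disjoint_self.1 (hIJ ▸ hdisj' I hI J hJ hne))
  have hP : IsPartition (sUnion '' 𝓘) := by
    refine PairwiseDisjoint.isPartition_of_exists_of_ne_empty ?_ (fun x => ?_) ?_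
    · rintro _ ⟨I, hI, rfl⟩ _ ⟨J, hJ, rfl⟩ hIJ
      exact hdisj' I hI J hJ fun h => hIJ (h ▸ rfl)
    · obtain ⟨I, hI, hxI⟩ := hcover _ (r.mem_classes x)
      exact ⟨_, mem_image_of_mem _ hI, _, hxI, r.refl' x⟩
    · rintro ⟨I, hI, hIe⟩
      exact (hne' I hI).ne_empty hIe
  refine ⟨mkClasses _ hP.2, le_of_forall_mem_classes_subset fun d hd => ?_,
    classes_mkClasses _ hP, by rw [classes_mkClasses _ hP, hinj.ncard_image]⟩
  obtain ⟨I, hI, hdI⟩ := hcover d hd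
  exact ⟨_, (classes_mkClasses _ hP).symm ▸ mem_image_of_mem _ hI, subset_sUnion_of_mem hdI⟩

theorem exists_le_classes_eq_of_three {I₁ I₂ I₃ : Set (Set X)} (h₁ : I₁ ⊆ r.classes)
    (h₂ : I₂ ⊆ r.classes) (h₃ : I₃ ⊆ r.classes) (hne₁ : I₁.Nonempty) (hne₂ : I₂.Nonempty)
    (hne₃ : I₃.Nonempty) (h₁₂ : Disjoint I₁ I₂) (h₁₃ : Disjoint I₁ I₃) (h₂₃ : Disjoint I₂ I₃)
    (hcover : r.classes ⊆ I₁ ∪ I₂ ∪ I₃) :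
    ∃ s : Setoid X, r ≤ s ∧ s.classes = {⋃₀ I₁, ⋃₀ I₂, ⋃₀ I₃} ∧ s.classes.ncard = 3 := by
  have hdisj : ({I₁, I₂, I₃} : Set (Set (Set X))).PairwiseDisjoint id := by
    rintro I (rfl | rfl | rfl) J (rfl | rfl | rfl) hIJ
    all_goals first
      | exact absurd rfl hIJ
      | exact h₁₂ | exact h₁₂.symm | exact h₁₃ | exact h₁₃.symm | exact h₂₃ | exact h₂₃.symm
  obtain ⟨s, hrs, hs, hs3⟩ := exists_le_classes_eq_image_sUnion
    (by rintro I (rfl | rfl | rfl); exacts [h₁, h₂, h₃])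
    (by rintro I (rfl | rfl | rfl); exacts [hne₁, hne₂, hne₃]) hdisj fun d hd => by
      rcases hcover hd with (h | h) | h
      exacts [⟨I₁, mem_insert _ _, h⟩, ⟨I₂, mem_insert_of_mem _ (mem_insert _ _), h⟩,
        ⟨I₃, mem_insert_of_mem _ (mem_insert_of_mem _ rfl), h⟩]
  refine ⟨s, hrs, by simp [hs, image_insert_eq], ?_⟩
  rw [hs3]
  exact ncard_eq_three.2 ⟨_, _, _, h₁₂.ne hne₁.ne_empty, h₁₃.ne hne₁.ne_empty,
    h₂₃.ne hne₂.ne_empty, rfl⟩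

def uniformCoarsenings (c : Setoid X) (k n : ℕ) : Set (Setoid X) :=
  {A | A.classes.ncard = k ∧ (∀ e ∈ A.classes, e.ncard = n) ∧ c ≤ A}

variable {c A : Setoid X} {u t e : Set X} {D : Set (Set X)}

theorem disjoint_of_classes_eq_insert (hC : c.classes = insert u D) (hu : u.ncard = 6)
    (hD : ∀ d ∈ D, d.ncard = 3) (ht : t ∈ D) : Disjoint u t := by
  refine c.isPartition_classes.pairwiseDisjoint (by rw [hC]; exact mem_insert u D)
    (by rw [hC]; exact mem_insert_of_mem u ht) fun h => ?_
  subst h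
  have := hD u ht
  omega

theorem ncard_sUnion_of_subset (hC : c.classes = insert u D) (hD : ∀ d ∈ D, d.ncard = 3)
    {I : Set (Set X)} (hI : I ⊆ D) (hIfin : I.Finite) : (⋃₀ I).ncard = 3 * I.ncard := by
  have hIc : I ⊆ c.classes := hC ▸ hI.trans (subset_insert u D)
  rw [sUnion_eq_biUnion, ncard_biUnion_eq_mul (s := fun d => d) hIfin
    (fun d hd => finite_of_ncard_ne_zero (by rw [hD d (hI hd)]; norm_num))
    (c.isPartition_classes.pairwiseDisjoint.subset hIc) (fun d hd => hD d (hI hd)), mul_comm]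

theorem eq_sUnion_of_not_subset (hC : c.classes = insert u D) (hcA : c ≤ A)
    (he : e ∈ A.classes) (hue : ¬ u ⊆ e) : e = ⋃₀ {d ∈ D | d ⊆ e} := by
  conv_lhs => rw [← sUnion_setOf_mem_classes_subset hcA he, hC]
  congr 1
  ext d
  simp only [mem_insert_iff, mem_ofPred_eq]
  constructor
  · rintro ⟨rfl | hd, hde⟩
    exacts [absurd hde hue, ⟨hd, hde⟩]
  · exact fun ⟨hd, hde⟩ => ⟨Or.inr hd, hde⟩

theorem exists_eq_union_of_subset (hC : c.classes = insert u D) (hu : u.ncard = 6)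
    (hD : ∀ d ∈ D, d.ncard = 3) (hDfin : D.Finite) (hcA : c ≤ A) (he : e ∈ A.classes)
    (hue : u ⊆ e) (he9 : e.ncard = 9) : ∃ t ∈ D, e = u ∪ t := by
  set J := {d ∈ D | d ⊆ e}
  have heJ : e = u ∪ ⋃₀ J := by
    conv_lhs => rw [← sUnion_setOf_mem_classes_subset hcA he, hC]
    rw [← sUnion_insert]
    congr 1
    ext d
    simp only [mem_insert_iff, mem_ofPred_eq, J]
    constructor
    · rintro ⟨rfl | hd, hde⟩
      exacts [Or.inl rfl, Or.inr ⟨hd, hde⟩]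
    · rintro (rfl | ⟨hd, hde⟩)
      exacts [⟨Or.inl rfl, hue⟩, ⟨Or.inr hd, hde⟩]
  have hefin : e.Finite := finite_of_ncard_ne_zero (by omega)
  have hJ : J.ncard = 1 := by
    have : e.ncard = 6 + 3 * J.ncard := by
      rw [heJ, ncard_union_eq (disjoint_sUnion_right.2 fun d hd =>
          disjoint_of_classes_eq_insert hC hu hD hd.1) (hefin.subset hue)
          (hefin.subset (sUnion_subset fun d hd => hd.2)),
        hu, ncard_sUnion_of_subset hC hD (sep_subset _ _) (hDfin.subset (sep_subset _ _))]
    omega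
  obtain ⟨t, hJt⟩ := ncard_eq_one.1 hJ
  exact ⟨t, (hJt ▸ mem_singleton t : t ∈ J).1, by rw [heJ, hJt, sUnion_singleton]⟩

theorem exists_le_classes_eq_triple (hC : c.classes = insert u D) (hu : u.ncard = 6)
    (hD : ∀ d ∈ D, d.ncard = 3) (ht : t ∈ D) {s : Set (Set X)} (hs : s ⊆ D \ {t})
    (hsne : s.Nonempty) (hrne : (D \ insert t s).Nonempty) :
    ∃ B : Setoid X, c ≤ B ∧ B.classes = {u ∪ t, ⋃₀ s, ⋃₀ (D \ insert t s)} ∧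
      B.classes.ncard = 3 := by
  have huD : u ∉ D := fun h => by have := hD u h; omega
  have hts : t ∉ s := fun h => (hs h).2 rfl
  have h12 : Disjoint ({u, t} : Set (Set X)) s := by
    rw [disjoint_insert_left, disjoint_singleton_left]
    exact ⟨fun h => huD (hs h).1, hts⟩
  have h13 : Disjoint ({u, t} : Set (Set X)) (D \ insert t s) := by
    rw [disjoint_insert_left, disjoint_singleton_left]
    exact ⟨fun h => huD h.1, fun h => h.2 (mem_insert t s)⟩
  have h23 : Disjoint s (D \ insert t s) :=
    disjoint_left.2 fun d hd hdr => hdr.2 (mem_insert_of_mem t hd)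
  have hcover : c.classes ⊆ {u, t} ∪ s ∪ D \ insert t s := by
    rw [hC]
    rintro d (rfl | hd)
    · exact Or.inl (Or.inl (mem_insert _ _))
    by_cases hdt : d = t
    · exact Or.inl (Or.inl (hdt ▸ mem_insert_of_mem _ rfl))
    by_cases hds : d ∈ s
    · exact Or.inl (Or.inr hds)
    · exact Or.inr ⟨hd, by rintro (h | h); exacts [hdt h, hds h]⟩
  obtain ⟨B, hcB, hB, hB3⟩ := exists_le_classes_eq_of_three
    (by rw [hC]; exact insert_subset_insert (singleton_subset_iff.2 ht))
    (by rw [hC]; exact fun d hd => mem_insert_of_mem u (hs hd).1)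
    (by rw [hC]; exact fun d hd => mem_insert_of_mem u hd.1)
    (insert_nonempty u {t}) hsne hrne h12 h13 h23 hcover
  exact ⟨B, hcB, by rw [hB, sUnion_pair], hB3⟩

theorem exists_mem_uniformCoarsenings_classes_eq (hC : c.classes = insert u D)
    (hu : u.ncard = 6) (hD : ∀ d ∈ D, d.ncard = 3) (hD7 : D.ncard = 7) (ht : t ∈ D)
    {s : Set (Set X)} (hs : s ⊆ D \ {t}) (hs3 : s.ncard = 3) :
    ∃ B ∈ c.uniformCoarsenings 3 9, B.classes = {u ∪ t, ⋃₀ s, ⋃₀ (D \ insert t s)} := by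
  have hDfin : D.Finite := finite_of_ncard_ne_zero (by omega)
  have hr3 : (D \ insert t s).ncard = 3 := by
    have hts : insert t s ⊆ D := insert_subset ht fun d hd => (hs hd).1
    rw [ncard_sdiff hts (hDfin.subset hts), ncard_insert_of_notMem (fun h => (hs h).2 rfl)
      (hDfin.subset ((subset_insert t s).trans hts)), hs3, hD7]
  obtain ⟨B, hcB, hB, hB3⟩ := exists_le_classes_eq_triple hC hu hD ht hs
    (nonempty_of_ncard_ne_zero (by omega)) (nonempty_of_ncard_ne_zero (by omega))
  refine ⟨B, ⟨hB3, ?_, hcB⟩, hB⟩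
  rw [hB]
  rintro _ (rfl | rfl | rfl)
  · rw [ncard_union_eq (disjoint_of_classes_eq_insert hC hu hD ht)
      (finite_of_ncard_ne_zero (by omega)) (finite_of_ncard_ne_zero (by rw [hD t ht]; omega)),
      hu, hD t ht]
  · rw [ncard_sUnion_of_subset hC hD (fun d hd => (hs hd).1)
      (hDfin.subset fun d hd => (hs hd).1), hs3]
  · rw [ncard_sUnion_of_subset hC hD sdiff_subset (hDfin.subset sdiff_subset), hr3]

theorem not_subset_of_mem_classes_of_ne {e e' d : Set X} (he : e ∈ A.classes)
    (he' : e' ∈ A.classes) (hne : e ≠ e') (hd : d.Nonempty) (hde' : d ⊆ e') : ¬ d ⊆ e :=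
  fun hde => hne (eq_of_mem_classes he (hde hd.some_mem) he' (hde' hd.some_mem))

theorem sep_subset_class_mem_of_mem_uniformCoarsenings (hC : c.classes = insert u D)
    (hu : u.ncard = 6) (hD : ∀ d ∈ D, d.ncard = 3) (hD7 : D.ncard = 7) (ht : t ∈ D)
    {p : Set X} (hp : p ∈ D) (hpt : p ≠ t) {x₀ : X} (hx₀ : x₀ ∈ p)
    (hA : A ∈ c.uniformCoarsenings 3 9) (htA : u ∪ t ∈ A.classes) :
    {d ∈ D | d ⊆ {y | A y x₀}} ∈ {s | s ⊆ D \ {t} ∧ s.ncard = 3 ∧ p ∈ s} := by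
  have hDfin : D.Finite := finite_of_ncard_ne_zero (by omega)
  have hx₀ut : x₀ ∉ u ∪ t := by
    rintro (hxu | hxt)
    · exact disjoint_left.1 (disjoint_of_classes_eq_insert hC hu hD hp) hxu hx₀
    · refine disjoint_left.1 (c.isPartition_classes.pairwiseDisjoint ?_ ?_ hpt) hx₀ hxt <;>
        rw [hC] <;> exact mem_insert_of_mem u ‹_›
  have hne : {y | A y x₀} ≠ u ∪ t := fun h => hx₀ut (h ▸ A.refl' x₀)
  have hue : ¬ u ⊆ {y | A y x₀} := not_subset_of_mem_classes_of_ne (A.mem_classes x₀) htA hne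
    (nonempty_of_ncard_ne_zero (by omega)) subset_union_left
  have hte : ¬ t ⊆ {y | A y x₀} := not_subset_of_mem_classes_of_ne (A.mem_classes x₀) htA hne
    (nonempty_of_ncard_ne_zero (by rw [hD t ht]; omega)) subset_union_right
  refine ⟨fun d hd => ⟨hd.1, fun h => hte (h ▸ hd.2)⟩, ?_, hp, subset_of_le_of_mem_classes hA.2.2
    (by rw [hC]; exact mem_insert_of_mem u hp) (A.mem_classes x₀) hx₀ (A.refl' x₀)⟩
  have h9 := hA.2.1 _ (A.mem_classes x₀)
  rw [eq_sUnion_of_not_subset hC hA.2.2 (A.mem_classes x₀) hue,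
    ncard_sUnion_of_subset hC hD (sep_subset _ _) (hDfin.subset (sep_subset _ _))] at h9
  omega

theorem classes_eq_of_mem_uniformCoarsenings (hC : c.classes = insert u D) (hu : u.ncard = 6)
    (hD : ∀ d ∈ D, d.ncard = 3) (hD7 : D.ncard = 7) (ht : t ∈ D) {p : Set X} (hp : p ∈ D)
    (hpt : p ≠ t) {x₀ : X} (hx₀ : x₀ ∈ p) (hA : A ∈ c.uniformCoarsenings 3 9)
    (htA : u ∪ t ∈ A.classes) :
    A.classes = {u ∪ t, ⋃₀ {d ∈ D | d ⊆ {y | A y x₀}},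
      ⋃₀ (D \ insert t {d ∈ D | d ⊆ {y | A y x₀}})} := by
  set s := {d ∈ D | d ⊆ {y | A y x₀}}
  obtain ⟨hs, hs3, -⟩ :=
    sep_subset_class_mem_of_mem_uniformCoarsenings hC hu hD hD7 ht hp hpt hx₀ hA htA
  obtain ⟨B, hB, hBc⟩ := exists_mem_uniformCoarsenings_classes_eq hC hu hD hD7 ht hs hs3
  have hune : u.Nonempty := nonempty_of_ncard_ne_zero (by omega)
  have htne : t.Nonempty := nonempty_of_ncard_ne_zero (by rw [hD t ht]; omega)
  have hAB : A ≤ B := by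
    refine le_of_forall_mem_classes_subset fun e he => ?_
    by_cases h1 : e = u ∪ t
    · exact ⟨u ∪ t, by rw [hBc]; exact mem_insert _ _, h1.le⟩
    have hue := not_subset_of_mem_classes_of_ne he htA h1 hune subset_union_left
    have hte := not_subset_of_mem_classes_of_ne he htA h1 htne subset_union_right
    rw [eq_sUnion_of_not_subset hC hA.2.2 he hue]
    by_cases h2 : e = {y | A y x₀}
    · exact ⟨⋃₀ s, by rw [hBc]; exact mem_insert_of_mem _ (mem_insert _ _), h2 ▸ subset_rfl⟩
    refine ⟨_, by rw [hBc]; exact mem_insert_of_mem _ (mem_insert_of_mem _ rfl), sUnion_mono ?_⟩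
    rintro d ⟨hdD, hde⟩
    refine ⟨hdD, ?_⟩
    rintro (rfl | ⟨-, hde₀⟩)
    · exact hte hde
    · exact not_subset_of_mem_classes_of_ne he (A.mem_classes x₀) h2
        (nonempty_of_ncard_ne_zero (by rw [hD d hdD]; omega)) hde₀ hde
  rw [eq_of_le_of_forall_ncard_classes_eq hAB (by norm_num) hA.2.1 hB.2.1, hBc]

theorem ncard_setOf_mem_uniformCoarsenings_union_mem_classes (hC : c.classes = insert u D)
    (hu : u.ncard = 6) (hD : ∀ d ∈ D, d.ncard = 3) (hD7 : D.ncard = 7) (ht : t ∈ D) :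
    {A ∈ c.uniformCoarsenings 3 9 | u ∪ t ∈ A.classes}.ncard = 10 := by
  have hDfin : D.Finite := finite_of_ncard_ne_zero (by omega)
  obtain ⟨p, hpD, hpt⟩ := exists_ne_of_one_lt_ncard (by omega : 1 < D.ncard) t
  obtain ⟨x₀, hx₀⟩ := nonempty_of_ncard_ne_zero (by rw [hD p hpD]; omega : p.ncard ≠ 0)
  -- `A` is determined by the 3-classes inside the `A`-class of a point `x₀` outside `u ∪ t`.
  set Φ := fun A : Setoid X => {d ∈ D | d ⊆ {y | A y x₀}}
  have hinj : InjOn Φ {A ∈ c.uniformCoarsenings 3 9 | u ∪ t ∈ A.classes} :=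
    fun A hA A' hA' h => classes_inj.2 <| by
      rw [classes_eq_of_mem_uniformCoarsenings hC hu hD hD7 ht hpD hpt hx₀ hA.1 hA.2,
        classes_eq_of_mem_uniformCoarsenings hC hu hD hD7 ht hpD hpt hx₀ hA'.1 hA'.2]
      simp only [Φ] at h
      rw [h]
  have himage : Φ '' {A ∈ c.uniformCoarsenings 3 9 | u ∪ t ∈ A.classes} =
      {s | s ⊆ D \ {t} ∧ s.ncard = 2 + 1 ∧ p ∈ s} := by
    refine subset_antisymm (image_subset_iff.2 fun A hA =>
      sep_subset_class_mem_of_mem_uniformCoarsenings hC hu hD hD7 ht hpD hpt hx₀ hA.1 hA.2) ?_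
    rintro s ⟨hs, hs3, hps⟩
    obtain ⟨B, hB, hBc⟩ := exists_mem_uniformCoarsenings_classes_eq hC hu hD hD7 ht hs hs3
    refine ⟨B, ⟨hB, by rw [hBc]; exact mem_insert _ _⟩, ?_⟩
    have hx₀B : {y | B y x₀} = ⋃₀ s := eq_of_mem_classes (B.mem_classes x₀) (B.refl' x₀)
      (by rw [hBc]; exact mem_insert_of_mem _ (mem_insert _ _)) ⟨p, hps, hx₀⟩
    simp only [Φ, hx₀B]
    exact setOf_mem_subset_sUnion (hC ▸ subset_insert u D) fun d hd => (hs hd).1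
  rw [← hinj.ncard_image, himage, ncard_setOf_subset_mem_ncard_eq hDfin.sdiff ⟨hpD, hpt⟩ 2,
    ncard_sdiff_singleton_of_mem ht, hD7]
  rfl

theorem ncard_uniformCoarsenings (hC : c.classes = insert u D) (hu : u.ncard = 6)
    (hD : ∀ d ∈ D, d.ncard = 3) (hD7 : D.ncard = 7) : (c.uniformCoarsenings 3 9).ncard = 70 := by
  have hDfin : D.Finite := finite_of_ncard_ne_zero (by omega)
  obtain ⟨x, hx⟩ := nonempty_of_ncard_ne_zero (by omega : u.ncard ≠ 0)
  have hunion : c.uniformCoarsenings 3 9 =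
      ⋃ t ∈ D, {A ∈ c.uniformCoarsenings 3 9 | u ∪ t ∈ A.classes} := by
    refine subset_antisymm (fun A hA => ?_) (iUnion₂_subset fun t _ A hA => hA.1)
    have hux : u ⊆ {y | A y x} := subset_of_le_of_mem_classes hA.2.2
      (by rw [hC]; exact mem_insert u D) (A.mem_classes x) hx (A.refl' x)
    obtain ⟨t, ht, hxt⟩ := exists_eq_union_of_subset hC hu hD hDfin hA.2.2 (A.mem_classes x) hux
      (hA.2.1 _ (A.mem_classes x))
    exact mem_iUnion₂.2 ⟨t, ht, hA, hxt ▸ A.mem_classes x⟩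
  have hdisj : D.PairwiseDisjoint fun t => {A ∈ c.uniformCoarsenings 3 9 | u ∪ t ∈ A.classes} := by
    refine fun t ht t' ht' htt' => disjoint_left.2 fun A hA hA' => htt' ?_
    have h : u ∪ t = u ∪ t' := eq_of_mem_classes hA.2 (Or.inl hx) hA'.2 (Or.inl hx)
    calc t = (u ∪ t) \ u := (disjoint_of_classes_eq_insert hC hu hD ht).sup_sdiff_cancel_left.symm
      _ = (u ∪ t') \ u := by rw [h]
      _ = t' := (disjoint_of_classes_eq_insert hC hu hD ht').sup_sdiff_cancel_left
  rw [hunion, ncard_biUnion_eq_mul hDfin (fun t ht => finite_of_ncard_ne_zero (by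
      rw [ncard_setOf_mem_uniformCoarsenings_union_mem_classes hC hu hD hD7 ht]; omega)) hdisj
    fun t ht => ncard_setOf_mem_uniformCoarsenings_union_mem_classes hC hu hD hD7 ht, hD7]

end Setoid

theorem stmt_17_general {X : Type*} (a b : Setoid X)
    (h3 : {c ∈ (a ⊔ b).classes | c.ncard = 3}.ncard = 7)
    (h6 : {c ∈ (a ⊔ b).classes | c.ncard = 6}.ncard = 1)
    (h8 : (a ⊔ b).classes.ncard = 8) :
    {A : Setoid X | A.classes.ncard = 3 ∧ (∀ c ∈ A.classes, c.ncard = 9) ∧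
        a ≤ A ∧ b ≤ A}.ncard = 70 := by
  obtain ⟨u, hu, hC⟩ := exists_eq_insert_sep_of_ncard (f := ncard) (by norm_num) h3 h6 h8
  have hS : {A : Setoid X | A.classes.ncard = 3 ∧ (∀ c ∈ A.classes, c.ncard = 9) ∧
      a ≤ A ∧ b ≤ A} = (a ⊔ b).uniformCoarsenings 3 9 := by
    ext A
    simp only [Setoid.uniformCoarsenings, sup_le_iff, mem_ofPred_eq]
  rw [hS]
  exact Setoid.ncard_uniformCoarsenings hC hu (fun d hd => hd.2) h3

theorem stmt_17 {X : Type*} [Fintype X] (hX : Fintype.card X = 27) (a b : Setoid X)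
    (ha1 : a.classes.ncard = 9) (ha2 : ∀ c ∈ a.classes, c.ncard = 3)
    (hb1 : b.classes.ncard = 9) (hb2 : ∀ c ∈ b.classes, c.ncard = 3)
    (h3 : {c ∈ (a ⊔ b).classes | c.ncard = 3}.ncard = 7)
    (h6 : {c ∈ (a ⊔ b).classes | c.ncard = 6}.ncard = 1)
    (h8 : (a ⊔ b).classes.ncard = 8) :
    {A : Setoid X | A.classes.ncard = 3 ∧ (∀ c ∈ A.classes, c.ncard = 9) ∧
        a ≤ A ∧ b ≤ A}.ncard = 70 :=
  stmt_17_general a b h3 h6 h8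
end

section
/- Let X be a 27-element set and ρ a permutation of the set of 3-element subsets of X such that |ρ(α) ∩ ρ(β)| = |α ∩ β| for all 3-element subsets α, β, and γ ⊆ α ∪ β iff ρ(γ) ⊆ ρ(α) ∪ ρ(β) for all 3-element subsets α, β, γ. Then there is a permutation σ of X such that whenever α ∩ β = {p}, we have ρ(α) ∩ ρ(β) = {σ(p)}; in particular ρ is induced by a permutation of X on all 3-element subsets. -/
theorem stmt_19 {X : Type*} [Fintype X] [DecidableEq X] (hX : Fintype.card X = 27)
    (ρ : Equiv.Perm {s : Finset X // s.card = 3})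
    (h1 : ∀ α β : {s : Finset X // s.card = 3},
      ((ρ α).1 ∩ (ρ β).1).card = (α.1 ∩ β.1).card)
    (h2 : ∀ α β γ : {s : Finset X // s.card = 3},
      γ.1 ⊆ α.1 ∪ β.1 ↔ (ρ γ).1 ⊆ (ρ α).1 ∪ (ρ β).1) :
    ∃ σ : Equiv.Perm X,
      (∀ (α β : {s : Finset X // s.card = 3}) (p : X),
        α.1 ∩ β.1 = {p} → (ρ α).1 ∩ (ρ β).1 = {σ p}) ∧
      ∀ α : {s : Finset X // s.card = 3}, (ρ α).1 = α.1.image σ := by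
  classical
  -- fresh element
  have fresh : ∀ t : Finset X, t.card < 27 → ∃ z, z ∉ t := by
    intro t ht
    by_contra h
    push_neg at h
    have : (Finset.univ : Finset X).card ≤ t.card :=
      Finset.card_le_card (fun x _ => h x)
    rw [Finset.card_univ, hX] at this
    omega
  have card3 : ∀ a b c : X, a ≠ b → a ≠ c → b ≠ c →
      ({a, b, c} : Finset X).card = 3 := by
    intro a b c hab hac hbc
    rw [Finset.card_insert_of_notMem (by simp [hab, hac]),
      Finset.card_insert_of_notMem (by simp [hbc]), Finset.card_singleton]
  have exmem : ∀ s t : Finset X, s ⊆ t → s.card < t.card → ∃ x ∈ t, x ∉ s := by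
    intro s t hst hc
    refine Finset.exists_of_ssubset (hst.ssubset_of_ne ?_)
    intro h
    rw [h] at hc
    omega
  -- trilemma
  have tri : ∀ A B C : Finset X, A.card = 3 → B.card = 3 → C.card = 3 →
      (A ∩ B).card = 2 → (A ∩ C).card = 2 → (B ∩ C).card = 2 →
      ¬ A ∩ B ⊆ C → C ⊆ A ∪ B := by
    intro A B C hA hB hC hAB hAC hBC hsub
    have hCA : (C ∩ A).card = 2 := by rw [Finset.inter_comm]; exact hAC
    have hCB : (C ∩ B).card = 2 := by rw [Finset.inter_comm]; exact hBC
    have hU : (C ∩ A) ∪ (C ∩ B) = C ∩ (A ∪ B) := by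
      rw [Finset.inter_union_distrib_left]
    have hI : (C ∩ A) ∩ (C ∩ B) = C ∩ (A ∩ B) := by
      ext x; simp; tauto
    have key := Finset.card_union_add_card_inter (C ∩ A) (C ∩ B)
    rw [hU, hI, hCA, hCB] at key
    have hIle : (C ∩ (A ∩ B)).card ≤ 1 := by
      have hs : C ∩ (A ∩ B) ⊆ A ∩ B := Finset.inter_subset_right
      have hne : C ∩ (A ∩ B) ≠ A ∩ B := by
        intro h
        exact hsub (by rw [← h]; exact Finset.inter_subset_left)
      have := Finset.card_lt_card (hs.ssubset_of_ne hne)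
      omega
    have hUC : C ∩ (A ∪ B) ⊆ C := Finset.inter_subset_left
    have hle : (C ∩ (A ∪ B)).card ≤ 3 := hC ▸ Finset.card_le_card hUC
    have : C ∩ (A ∪ B) = C :=
      Finset.eq_of_subset_of_card_le hUC (by omega)
    rw [← this]
    exact Finset.inter_subset_right
  -- pair lemma
  have P2 : ∀ p x : X, x ≠ p → ∃ P : Finset X, P.card = 2 ∧
      ∀ α : {s : Finset X // s.card = 3}, p ∈ α.1 → x ∈ α.1 → P ⊆ (ρ α).1 := by
    intro p x hxp
    obtain ⟨z₁, hz₁⟩ := fresh {p, x} (by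
      have : ({p, x} : Finset X).card ≤ 2 := Finset.card_insert_le _ _ |>.trans (by simp)
      omega)
    obtain ⟨z₂, hz₂⟩ := fresh {p, x, z₁} (by
      have : ({p, x, z₁} : Finset X).card ≤ 3 :=
        (Finset.card_insert_le _ _).trans (by
          have := Finset.card_insert_le x ({z₁} : Finset X); simp at this ⊢; omega)
      omega)
    simp at hz₁ hz₂
    obtain ⟨hz₁p, hz₁x⟩ := hz₁
    obtain ⟨hz₂p, hz₂x, hz₂z₁⟩ := hz₂
    have hpx : p ≠ x := fun h => hxp h.symm
    set α₁ : {s : Finset X // s.card = 3} :=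
      ⟨{p, x, z₁}, card3 p x z₁ hpx (Ne.symm hz₁p) (Ne.symm hz₁x)⟩ with hα₁
    set α₂ : {s : Finset X // s.card = 3} :=
      ⟨{p, x, z₂}, card3 p x z₂ hpx (Ne.symm hz₂p) (Ne.symm hz₂x)⟩ with hα₂
    have hint : α₁.1 ∩ α₂.1 = {p, x} := by
      have e1 : α₁.1 = {p, x, z₁} := rfl
      have e2 : α₂.1 = {p, x, z₂} := rfl
      rw [e1, e2]
      ext w
      simp only [Finset.mem_inter, Finset.mem_insert, Finset.mem_singleton]
      constructor
      · rintro ⟨h | h | h, h' | h' | h'⟩ <;> subst_vars <;> tauto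
      · rintro (rfl | rfl) <;> tauto
    have hcard12 : ((ρ α₁).1 ∩ (ρ α₂).1).card = 2 := by
      rw [h1, hint, Finset.card_insert_of_notMem (by simp [hpx]), Finset.card_singleton]
    refine ⟨(ρ α₁).1 ∩ (ρ α₂).1, hcard12, ?_⟩
    intro α hp hx
    by_cases hv1 : α.1 = α₁.1
    · have : α = α₁ := Subtype.ext hv1
      rw [this]
      exact Finset.inter_subset_left
    by_cases hv2 : α.1 = α₂.1
    · have : α = α₂ := Subtype.ext hv2
      rw [this]
      exact Finset.inter_subset_right
    -- α ∩ αᵢ = {p, x}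
    have hgen : ∀ (z : X) (β : {s : Finset X // s.card = 3}), β.1 = {p, x, z} →
        α.1 ≠ β.1 → α.1 ∩ β.1 = {p, x} := by
      intro z β hβ hne
      ext w
      constructor
      · intro hw
        simp at hw
        obtain ⟨hwα, hwβ⟩ := hw
        rw [hβ] at hwβ
        simp at hwβ
        rcases hwβ with h | h | h
        · simp [h]
        · simp [h]
        · exfalso
          apply hne
          have hsub : β.1 ⊆ α.1 := by
            rw [hβ]
            intro u hu
            simp at hu
            rcases hu with h' | h' | h' <;> subst h'
            · exact hp
            · exact hx
            · subst h; exact hwα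
          exact (Finset.eq_of_subset_of_card_le hsub (by rw [α.2, β.2])).symm
      · intro hw
        simp at hw
        rcases hw with h | h <;> subst h <;>
          simp [Finset.mem_inter, hp, hx, hβ]
    have hA : α.1 ∩ α₁.1 = {p, x} := hgen z₁ α₁ rfl hv1
    have hB : α.1 ∩ α₂.1 = {p, x} := hgen z₂ α₂ rfl hv2
    have hcpx : ({p, x} : Finset X).card = 2 := by
      rw [Finset.card_insert_of_notMem (by simp [hpx]), Finset.card_singleton]
    by_cases hP : (ρ α₁).1 ∩ (ρ α₂).1 ⊆ (ρ α).1
    · exact hP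
    exfalso
    have hc1 : ((ρ α₁).1 ∩ (ρ α).1).card = 2 := by
      rw [h1, Finset.inter_comm, hA]; exact hcpx
    have hc2 : ((ρ α₂).1 ∩ (ρ α).1).card = 2 := by
      rw [h1, Finset.inter_comm, hB]; exact hcpx
    have hCsub : (ρ α).1 ⊆ (ρ α₁).1 ∪ (ρ α₂).1 :=
      tri (ρ α₁).1 (ρ α₂).1 (ρ α).1 (ρ α₁).2 (ρ α₂).2 (ρ α).2 hcard12 hc1 hc2 hP
    have hαsub : α.1 ⊆ α₁.1 ∪ α₂.1 := (h2 α₁ α₂ α).mpr hCsub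
    -- derive contradiction: α ⊆ {p,x,z₁,z₂}, α ⊇ {p,x}, α ≠ α₁, α₂
    have hpxα : ({p, x} : Finset X) ⊆ α.1 := by
      intro w hw; simp at hw; rcases hw with h | h <;> subst h <;> assumption
    obtain ⟨w, hwα, hwpx⟩ := exmem {p, x} α.1 hpxα (by rw [α.2, hcpx]; omega)
    have hw' : w ∈ α₁.1 ∪ α₂.1 := hαsub hwα
    simp [hα₁, hα₂] at hw'
    simp at hwpx
    obtain ⟨hwp, hwx⟩ := hwpx
    have hwz : w = z₁ ∨ w = z₂ := by tauto
    rcases hwz with h | h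
    · apply hv1
      subst h
      have hsub : α₁.1 ⊆ α.1 := by
        intro u hu
        simp [hα₁] at hu
        rcases hu with h' | h' | h' <;> subst h'
        · exact hp
        · exact hx
        · exact hwα
      exact (Finset.eq_of_subset_of_card_le hsub (by rw [α.2, α₁.2])).symm
    · apply hv2
      subst h
      have hsub : α₂.1 ⊆ α.1 := by
        intro u hu
        simp [hα₂] at hu
        rcases hu with h' | h' | h' <;> subst h'
        · exact hp
        · exact hx
        · exact hwα
      exact (Finset.eq_of_subset_of_card_le hsub (by rw [α.2, α₂.2])).symm
  choose Pf hPcard hPsub using P2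
  -- distinctness of the pair images
  have f1 : ∀ p x y (hx : x ≠ p) (hy : y ≠ p), x ≠ y →
      Pf p x hx ≠ Pf p y hy := by
    intro p x y hx hy hxy heq
    obtain ⟨a, ha⟩ := fresh {p, x, y} (by
      have : ({p, x, y} : Finset X).card ≤ 3 := by
        apply (Finset.card_insert_le _ _).trans
        have := Finset.card_insert_le x ({y} : Finset X)
        simp at this ⊢; omega
      omega)
    obtain ⟨b, hb⟩ := fresh {p, x, y, a} (by
      have : ({p, x, y, a} : Finset X).card ≤ 4 := by
        apply (Finset.card_insert_le _ _).trans
        have h3 : ({x, y, a} : Finset X).card ≤ 3 := by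
          apply (Finset.card_insert_le _ _).trans
          have := Finset.card_insert_le y ({a} : Finset X)
          simp at this ⊢; omega
        omega
      omega)
    simp at ha hb
    obtain ⟨hap, hax, hay⟩ := ha
    obtain ⟨hbp, hbx, hby, hba⟩ := hb
    set α : {s : Finset X // s.card = 3} :=
      ⟨{p, x, a}, card3 p x a (Ne.symm hx) (Ne.symm hap) (fun h => hax h.symm)⟩ with hα
    set β : {s : Finset X // s.card = 3} :=
      ⟨{p, y, b}, card3 p y b (Ne.symm hy) (Ne.symm hbp) (fun h => hby h.symm)⟩ with hβ
    have hint : α.1 ∩ β.1 = {p} := by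
      have e1 : α.1 = {p, x, a} := rfl
      have e2 : β.1 = {p, y, b} := rfl
      rw [e1, e2]
      ext w
      simp only [Finset.mem_inter, Finset.mem_insert, Finset.mem_singleton]
      constructor
      · rintro ⟨h | h | h, h' | h' | h'⟩ <;> subst_vars <;> tauto
      · rintro rfl
        tauto
    have hcard : ((ρ α).1 ∩ (ρ β).1).card = 1 := by
      rw [h1, hint, Finset.card_singleton]
    have hsubα : Pf p x hx ⊆ (ρ α).1 := hPsub p x hx α (Finset.mem_insert_self p _) (Finset.mem_insert_of_mem (Finset.mem_insert_self x _))
    have hsubβ : Pf p y hy ⊆ (ρ β).1 := hPsub p y hy β (Finset.mem_insert_self p _) (Finset.mem_insert_of_mem (Finset.mem_insert_self y _))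
    have : Pf p x hx ⊆ (ρ α).1 ∩ (ρ β).1 := by
      intro u hu
      exact Finset.mem_inter.mpr ⟨hsubα hu, hsubβ (heq ▸ hu)⟩
    have := (Finset.card_le_card this).trans_eq hcard
    rw [hPcard] at this
    omega
  -- nonempty intersections
  have f2 : ∀ p x y (hx : x ≠ p) (hy : y ≠ p), x ≠ y →
      (Pf p x hx ∩ Pf p y hy).Nonempty := by
    intro p x y hx hy hxy
    set γ : {s : Finset X // s.card = 3} :=
      ⟨{p, x, y}, card3 p x y (Ne.symm hx) (Ne.symm hy) hxy⟩ with hγ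
    have hsx : Pf p x hx ⊆ (ρ γ).1 := hPsub p x hx γ (Finset.mem_insert_self p _) (Finset.mem_insert_of_mem (Finset.mem_insert_self x _))
    have hsy : Pf p y hy ⊆ (ρ γ).1 := hPsub p y hy γ (Finset.mem_insert_self p _) (Finset.mem_insert_of_mem (Finset.mem_insert_of_mem (Finset.mem_singleton_self y)))
    have hu : Pf p x hx ∪ Pf p y hy ⊆ (ρ γ).1 := Finset.union_subset hsx hsy
    have hcu : (Pf p x hx ∪ Pf p y hy).card ≤ 3 := (ρ γ).2 ▸ Finset.card_le_card hu
    have key := Finset.card_union_add_card_inter (Pf p x hx) (Pf p y hy)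
    rw [hPcard, hPcard] at key
    rw [← Finset.card_pos]
    omega
  -- intersection is a single point
  have f3 : ∀ p x y (hx : x ≠ p) (hy : y ≠ p), x ≠ y → ∀ q q',
      q ∈ Pf p x hx ∩ Pf p y hy → q' ∈ Pf p x hx ∩ Pf p y hy → q = q' := by
    intro p x y hx hy hxy q q' hq hq'
    by_contra hne
    simp at hq hq'
    have hsub : ({q, q'} : Finset X) ⊆ Pf p x hx := by
      intro u hu; simp at hu; rcases hu with h | h <;> subst h <;> tauto
    have hsub' : ({q, q'} : Finset X) ⊆ Pf p y hy := by
      intro u hu; simp at hu; rcases hu with h | h <;> subst h <;> tauto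
    have hc : ({q, q'} : Finset X).card = 2 := by
      rw [Finset.card_insert_of_notMem (by simp [hne]), Finset.card_singleton]
    have e1 : ({q, q'} : Finset X) = Pf p x hx :=
      Finset.eq_of_subset_of_card_le hsub (by rw [hPcard, hc])
    have e2 : ({q, q'} : Finset X) = Pf p y hy :=
      Finset.eq_of_subset_of_card_le hsub' (by rw [hPcard, hc])
    exact f1 p x y hx hy hxy (e1 ▸ e2)
  -- key lemma: common image point of every block through p
  have key : ∀ p : X, ∃ q, ∀ α : {s : Finset X // s.card = 3}, p ∈ α.1 → q ∈ (ρ α).1 := by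
    intro p
    obtain ⟨x₀, hx₀⟩ := fresh {p} (by rw [Finset.card_singleton]; omega)
    obtain ⟨x₁, hx₁⟩ := fresh {p, x₀} (by
      have : ({p, x₀} : Finset X).card ≤ 2 := (Finset.card_insert_le _ _).trans (by simp)
      omega)
    simp at hx₀ hx₁
    obtain ⟨hx₁p, hx₁x₀⟩ := hx₁
    obtain ⟨q, hq⟩ := f2 p x₀ x₁ hx₀ hx₁p (fun h => hx₁x₀ h.symm)
    have claim : ∀ x (hx : x ≠ p), q ∈ Pf p x hx := by
      intro x hx
      by_cases hx0 : x = x₀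
      · subst hx0; exact (Finset.mem_inter.mp hq).1
      by_cases hx1 : x = x₁
      · subst hx1; exact (Finset.mem_inter.mp hq).2
      by_contra hqx
      obtain ⟨a, ha⟩ := f2 p x x₀ hx hx₀ hx0
      obtain ⟨b, hb⟩ := f2 p x x₁ hx hx₁p hx1
      simp at ha hb hq
      have haq : a ≠ q := fun h => hqx (h ▸ ha.1)
      have hbq : b ≠ q := fun h => hqx (h ▸ hb.1)
      have hab : a ≠ b := by
        intro h
        subst h
        exact haq (f3 p x₀ x₁ hx₀ hx₁p (fun h => hx₁x₀ h.symm) a q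
          (Finset.mem_inter.mpr ⟨ha.2, hb.2⟩) (Finset.mem_inter.mpr hq))
      have pair_eq : ∀ (u v : X) (s : Finset X), s.card = 2 → u ∈ s → v ∈ s → u ≠ v →
          s = {u, v} := by
        intro u v s hs hu hv huv
        have hsub : ({u, v} : Finset X) ⊆ s := by
          intro w hw; simp at hw; rcases hw with h | h <;> subst h <;> assumption
        have hc : ({u, v} : Finset X).card = 2 := by
          rw [Finset.card_insert_of_notMem (by simp [huv]), Finset.card_singleton]
        exact (Finset.eq_of_subset_of_card_le hsub (by rw [hs, hc])).symm
      have hA : Pf p x₀ hx₀ = {q, a} := pair_eq q a _ (hPcard p x₀ hx₀) hq.1 ha.2 (Ne.symm haq)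
      have hB : Pf p x₁ hx₁p = {q, b} := pair_eq q b _ (hPcard p x₁ hx₁p) hq.2 hb.2 (Ne.symm hbq)
      have hC : Pf p x hx = {a, b} := pair_eq a b _ (hPcard p x hx) ha.1 hb.1 hab
      obtain ⟨x', hx'⟩ := fresh {p, x₀, x₁, x} (by
        have : ({p, x₀, x₁, x} : Finset X).card ≤ 4 := by
          apply (Finset.card_insert_le _ _).trans
          have h3 : ({x₀, x₁, x} : Finset X).card ≤ 3 := by
            apply (Finset.card_insert_le _ _).trans
            have := Finset.card_insert_le x₁ ({x} : Finset X)
            simp at this ⊢; omega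
          omega
        omega)
      simp at hx'
      obtain ⟨hx'p, hx'0, hx'1, hx'x⟩ := hx'
      obtain ⟨u, hu⟩ := f2 p x' x₀ hx'p hx₀ hx'0
      obtain ⟨v, hv⟩ := f2 p x' x₁ hx'p hx₁p hx'1
      obtain ⟨w, hw⟩ := f2 p x' x hx'p hx hx'x
      simp at hu hv hw
      rw [hA] at hu; rw [hB] at hv; rw [hC] at hw
      have hqab : q ∉ ({a, b} : Finset X) := by simp [Ne.symm haq, Ne.symm hbq]
      by_cases hqD : q ∈ Pf p x' hx'p
      · -- D = {q, w} with w ∈ {a,b}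
        have hwD : w ∈ Pf p x' hx'p := hw.1
        have hwab : w ∈ ({a, b} : Finset X) := hw.2
        have hwq : w ≠ q := fun h => hqab (h ▸ hwab)
        have hD : Pf p x' hx'p = {q, w} :=
          pair_eq q w _ (hPcard p x' hx'p) hqD hwD (Ne.symm hwq)
        simp at hwab
        rcases hwab with h | h <;> subst h
        · exact f1 p x' x₀ hx'p hx₀ hx'0 (hD.trans hA.symm)
        · exact f1 p x' x₁ hx'p hx₁p hx'1 (hD.trans hB.symm)
      · have huD : u ∈ Pf p x' hx'p := hu.1
        have hu' : u = a := by
          have := hu.2; simp at this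
          rcases this with h | h
          · exact absurd (h ▸ huD) hqD
          · exact h
        have hvD : v ∈ Pf p x' hx'p := hv.1
        have hv' : v = b := by
          have := hv.2; simp at this
          rcases this with h | h
          · exact absurd (h ▸ hvD) hqD
          · exact h
        have hD : Pf p x' hx'p = {a, b} :=
          pair_eq a b _ (hPcard p x' hx'p) (hu' ▸ huD) (hv' ▸ hvD) hab
        exact f1 p x' x hx'p hx hx'x (hD.trans hC.symm)
    refine ⟨q, ?_⟩
    intro α hpα
    obtain ⟨x, hxα, hxp⟩ := exmem {p} α.1 (by simpa using hpα) (by rw [α.2, Finset.card_singleton]; omega)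
    simp at hxp
    exact hPsub p x hxp α hpα hxα (claim x hxp)
  choose σ₀ hσ₀ using key
  -- injectivity
  have inj : Function.Injective σ₀ := by
    intro p p' heq
    by_contra hne
    obtain ⟨a, ha⟩ := fresh {p, p'} (by
      have : ({p, p'} : Finset X).card ≤ 2 := (Finset.card_insert_le _ _).trans (by simp)
      omega)
    obtain ⟨b, hb⟩ := fresh {p, p', a} (by
      have : ({p, p', a} : Finset X).card ≤ 3 := by
        apply (Finset.card_insert_le _ _).trans
        have := Finset.card_insert_le p' ({a} : Finset X)
        simp at this ⊢; omega
      omega)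
    obtain ⟨c, hc⟩ := fresh {p, p', a, b} (by
      have : ({p, p', a, b} : Finset X).card ≤ 4 := by
        apply (Finset.card_insert_le _ _).trans
        have h3 : ({p', a, b} : Finset X).card ≤ 3 := by
          apply (Finset.card_insert_le _ _).trans
          have := Finset.card_insert_le a ({b} : Finset X)
          simp at this ⊢; omega
        omega
      omega)
    obtain ⟨d, hd⟩ := fresh {p, p', a, b, c} (by
      have : ({p, p', a, b, c} : Finset X).card ≤ 5 := by
        apply (Finset.card_insert_le _ _).trans
        have h4 : ({p', a, b, c} : Finset X).card ≤ 4 := by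
          apply (Finset.card_insert_le _ _).trans
          have h3 : ({a, b, c} : Finset X).card ≤ 3 := by
            apply (Finset.card_insert_le _ _).trans
            have := Finset.card_insert_le b ({c} : Finset X)
            simp at this ⊢; omega
          omega
        omega
      omega)
    simp at ha hb hc hd
    obtain ⟨hap, hap'⟩ := ha
    obtain ⟨hbp, hbp', hba⟩ := hb
    obtain ⟨hcp, hcp', hca, hcb⟩ := hc
    obtain ⟨hdp, hdp', hda, hdb, hdc⟩ := hd
    set α : {s : Finset X // s.card = 3} :=
      ⟨{p, a, b}, card3 p a b (Ne.symm hap) (Ne.symm hbp) (fun h => hba h.symm)⟩ with hα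
    set β : {s : Finset X // s.card = 3} :=
      ⟨{p', c, d}, card3 p' c d (Ne.symm hcp') (Ne.symm hdp') (fun h => hdc h.symm)⟩ with hβ
    have hint : α.1 ∩ β.1 = ∅ := by
      have e1 : α.1 = {p, a, b} := rfl
      have e2 : β.1 = {p', c, d} := rfl
      apply Finset.eq_empty_iff_forall_notMem.mpr
      intro w hw
      rw [Finset.mem_inter, e1, e2] at hw
      simp only [Finset.mem_insert, Finset.mem_singleton] at hw
      obtain ⟨h | h | h, h' | h' | h'⟩ := hw <;> subst_vars <;> tauto
    have hcard : ((ρ α).1 ∩ (ρ β).1).card = 0 := by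
      rw [h1, hint, Finset.card_empty]
    have hmem : σ₀ p ∈ (ρ α).1 ∩ (ρ β).1 := by
      refine Finset.mem_inter.mpr ⟨hσ₀ p α (Finset.mem_insert_self p _), ?_⟩
      rw [heq]
      exact hσ₀ p' β (Finset.mem_insert_self p' _)
    rw [Finset.card_eq_zero] at hcard
    rw [hcard] at hmem
    exact absurd hmem (Finset.notMem_empty _)
  have bij : Function.Bijective σ₀ := Finite.injective_iff_bijective.mp inj
  refine ⟨Equiv.ofBijective σ₀ bij, ?_, ?_⟩
  · intro α β p hint
    have himg : ∀ γ : {s : Finset X // s.card = 3}, (ρ γ).1 = γ.1.image σ₀ := by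
      intro γ
      have hsub : γ.1.image σ₀ ⊆ (ρ γ).1 := by
        intro y hy
        simp [Finset.mem_image] at hy
        obtain ⟨w, hw, rfl⟩ := hy
        exact hσ₀ w γ hw
      exact (Finset.eq_of_subset_of_card_le hsub
        (by rw [(ρ γ).2, Finset.card_image_of_injective _ inj, γ.2])).symm
    rw [himg α, himg β, ← Finset.image_inter _ _ inj, hint, Finset.image_singleton]
    rfl
  · intro α
    have hsub : α.1.image (Equiv.ofBijective σ₀ bij) ⊆ (ρ α).1 := by
      intro y hy
      simp [Finset.mem_image] at hy
      obtain ⟨w, hw, rfl⟩ := hy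
      exact hσ₀ w α hw
    exact (Finset.eq_of_subset_of_card_le hsub
      (by rw [(ρ α).2, Finset.card_image_of_injective _ (Equiv.ofBijective σ₀ bij).injective, α.2])).symm
end
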